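/- arXiv:2503.00864 — 8 statements merged into one kernel-verified Lean document; each statement's English description precedes it below -/
import Mathlib

section
/- Let X be a metric space with a factor subset A through a point x ∈ X, with cofactor B = π_A⁻¹(x). Then B is also a factor subset of X through x, and the map (π_A, π_B) : X → A × B is an isometry onto the ℓ²-product A × B. -/
/-- `IsL2Prod Φ` means `Φ : X → Y × Z` is a bijection identifying `X` with the
ℓ²-direct product of the metric spaces `Y` and `Z`. -/
def IsL2Prod {X Y Z : Type} [MetricSpace X] [MetricSpace Y] [MetricSpace Z]
    (Φ : X → Y × Z) : Prop :=
  Function.Bijective Φ ∧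
    ∀ p q : X, dist p q ^ 2 = dist (Φ p).1 (Φ q).1 ^ 2 + dist (Φ p).2 (Φ q).2 ^ 2

/-- `A` is a factor subset of `X` through `x`: some ℓ²-product decomposition of `X`
carries `A` onto the fiber of the first factor through `x`. -/
def IsFactorSubset {X : Type} [MetricSpace X] (A : Set X) (x : X) : Prop :=
  x ∈ A ∧ ∃ (Y Z : Type) (_ : MetricSpace Y) (_ : MetricSpace Z) (Φ : X → Y × Z),
    IsL2Prod Φ ∧ A = {p : X | (Φ p).2 = (Φ x).2}

/-- A line in a metric space: a subset isometric to `ℝ`. -/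
def IsLine {X : Type} [MetricSpace X] (ℓ : Set X) : Prop :=
  ∃ γ : ℝ → X, Isometry γ ∧ Set.range γ = ℓ

/-- A splitting line: a line carried onto a fiber `ℝ × {z₀}` by some
ℓ²-product decomposition `X ≅ ℝ × Z`. -/
def IsSplittingLine {X : Type} [MetricSpace X] (ℓ : Set X) : Prop :=
  IsLine ℓ ∧ ∃ (Z : Type) (_ : MetricSpace Z) (Φ : X → ℝ × Z) (z₀ : Z),
    IsL2Prod Φ ∧ Φ '' ℓ = Set.univ ×ˢ {z₀}

/-- `π` is the nearest-point projection onto `A`: every point has `π p` as its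
unique nearest point in `A`. -/
def IsNearestPointProj {X : Type} [MetricSpace X] (A : Set X) (π : X → X) : Prop :=
  ∀ p : X, π p ∈ A ∧ (∀ a ∈ A, dist p (π p) ≤ dist p a) ∧
    ∀ a ∈ A, dist p a = dist p (π p) → a = π p

/-- The subset `A`, with the induced metric, is isometric to a real Hilbert space. -/
def IsHilbertSubset {X : Type} [MetricSpace X] (A : Set X) : Prop :=
  ∃ (H : Type) (_ : NormedAddCommGroup H) (_ : InnerProductSpace ℝ H) (_ : CompleteSpace H)
    (f : A → H), Isometry f ∧ Function.Surjective f

/-!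
Write `X ≅ Y × Z` with `A` the fibre `Y × {z₀}` through `x = (y₀, z₀)`. By Pythagoras the nearest
point of `A` to `(y, z)` is `(y, z₀)`, so the cofactor `π_A⁻¹(x)` is the fibre `{y₀} × Z`, a factor
subset for the swapped decomposition, and the nearest point of it to `(y, z)` is `(y₀, z)`. Hence
`(π_A, π_B)` is just `Φ` read through the isometries `A ≅ Y` and `B ≅ Z`.
-/

namespace IsL2Prod

variable {X Y Z : Type} [MetricSpace X] [MetricSpace Y] [MetricSpace Z]

theorem of_surjective {Φ : X → Y × Z} (hsurj : Function.Surjective Φ)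
    (hdist : ∀ p q : X, dist p q ^ 2 = dist (Φ p).1 (Φ q).1 ^ 2 + dist (Φ p).2 (Φ q).2 ^ 2) :
    IsL2Prod Φ := by
  refine ⟨⟨fun p q hpq => ?_, hsurj⟩, hdist⟩
  have : dist p q ^ 2 = 0 := by simp [hdist p q, hpq]
  exact dist_eq_zero.1 (pow_eq_zero_iff two_ne_zero |>.1 this)

theorem swap {Φ : X → Y × Z} (hΦ : IsL2Prod Φ) : IsL2Prod fun p => (Φ p).swap :=
  ⟨Prod.swap_bijective.comp hΦ.1, fun p q => by rw [hΦ.2 p q, add_comm]; rfl⟩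

end IsL2Prod

theorem IsNearestPointProj.map_eq_of_isL2Prod {X Y Z : Type} [MetricSpace X] [MetricSpace Y]
    [MetricSpace Z] {Φ : X → Y × Z} (hΦ : IsL2Prod Φ) {z₀ : Z} {π : X → X}
    (hπ : IsNearestPointProj {p | (Φ p).2 = z₀} π) (p : X) : Φ (π p) = ((Φ p).1, z₀) := by
  obtain ⟨a, ha⟩ := hΦ.1.2 ((Φ p).1, z₀)
  have ha_mem : a ∈ {p | (Φ p).2 = z₀} := by simp [ha]
  have ha_nearest : ∀ b ∈ {p | (Φ p).2 = z₀}, dist p a ≤ dist p b := by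
    intro b (hb : (Φ b).2 = z₀)
    have hsq : dist p a ^ 2 ≤ dist p b ^ 2 := by
      rw [hΦ.2 p a, hΦ.2 p b, ha, hb, dist_self, zero_pow two_ne_zero]
      gcongr
      exact sq_nonneg _
    exact pow_le_pow_iff_left₀ dist_nonneg dist_nonneg two_ne_zero |>.1 hsq
  have ha_eq : a = π p :=
    (hπ p).2.2 a ha_mem (le_antisymm (ha_nearest _ (hπ p).1) ((hπ p).2.1 a ha_mem))
  rw [← ha_eq, ha]

theorem preimage_eq_fst_fiber {X Y Z : Type*} {Φ : X → Y × Z} (hΦ : Function.Injective Φ)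
    {π : X → X} {x : X} (hπ : ∀ p, Φ (π p) = ((Φ p).1, (Φ x).2)) :
    π ⁻¹' {x} = {p | (Φ p).1 = (Φ x).1} := by
  ext p
  simp [← hΦ.eq_iff, hπ, Prod.ext_iff]

theorem isL2Prod_projection_pair {X Y Z : Type} [MetricSpace X] [MetricSpace Y] [MetricSpace Z]
    {Φ : X → Y × Z} (hΦ : IsL2Prod Φ) {y₀ : Y} {z₀ : Z} {A B : Set X}
    (hA : A ⊆ {p | (Φ p).2 = z₀}) (hB : B ⊆ {p | (Φ p).1 = y₀})
    {πA πB : X → X} (hπA_mem : ∀ p, πA p ∈ A) (hπB_mem : ∀ p, πB p ∈ B)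
    (hπA : ∀ p, Φ (πA p) = ((Φ p).1, z₀)) (hπB : ∀ p, Φ (πB p) = (y₀, (Φ p).2)) :
    IsL2Prod fun p => ((⟨πA p, hπA_mem p⟩ : A), (⟨πB p, hπB_mem p⟩ : B)) := by
  refine IsL2Prod.of_surjective ?_ fun p q => ?_
  · rintro ⟨⟨a, haA⟩, ⟨b, hbB⟩⟩
    obtain ⟨p, hp⟩ := hΦ.1.2 ((Φ a).1, (Φ b).2)
    have hπAp : πA p = a := hΦ.1.1 <| by rw [hπA, hp, ← hA haA]
    have hπBp : πB p = b := hΦ.1.1 <| by rw [hπB, hp, ← hB hbB]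
    exact ⟨p, by simp only [hπAp, hπBp]⟩
  · simp only [Subtype.dist_eq]
    rw [hΦ.2 p q, hΦ.2 (πA p), hΦ.2 (πB p), hπA, hπA, hπB, hπB]
    simp

/-- the cofactor `B = π_A⁻¹(x)` of a factor subset `A` through `x` is
again a factor subset through `x`, and `(π_A, π_B) : X → A × B` is an isometry onto
the ℓ²-product. -/
theorem cofactor_isFactorSubset {X : Type} [MetricSpace X] (A : Set X) (x : X)
    (hA : IsFactorSubset A x) (πA : X → X) (hπA : IsNearestPointProj A πA)
    (B : Set X) (hB : B = πA ⁻¹' {x}) (πB : X → X) (hπB : IsNearestPointProj B πB) :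
    IsFactorSubset B x ∧
    IsL2Prod (fun p : X => ((⟨πA p, (hπA p).1⟩ : A), (⟨πB p, (hπB p).1⟩ : B))) := by
  obtain ⟨-, Y, Z, _, _, Φ, hΦ, rfl⟩ := hA
  have hπA_eq := hπA.map_eq_of_isL2Prod hΦ
  obtain rfl : B = {p | (Φ p).1 = (Φ x).1} := hB.trans (preimage_eq_fst_fiber hΦ.1.1 hπA_eq)
  have hπB_eq : ∀ p, Φ (πB p) = ((Φ x).1, (Φ p).2) := fun p =>
    Prod.swap_injective (hπB.map_eq_of_isL2Prod (Φ := fun p => (Φ p).swap) hΦ.swap p)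
  exact ⟨⟨rfl, Z, Y, _, _, _, hΦ.swap, rfl⟩,
    isL2Prod_projection_pair hΦ subset_rfl subset_rfl _ _ hπA_eq hπB_eq⟩
end

section
/- Let X = Y × Ȳ be an ℓ²-product of metric spaces and let γ : ℝ → X be an isometric embedding (a line). Then P^Y ∘ γ and P^Ȳ ∘ γ are geodesics of constant speeds α ≥ 0 and β ≥ 0 respectively, with α² + β² = 1; that is, d(P^Y(γ(s)), P^Y(γ(t))) = α|s−t| and d(P^Ȳ(γ(s)), P^Ȳ(γ(t))) = β|s−t| for all s, t ∈ ℝ. -/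
/-!
For the projections `y`, `z` of `γ`, the vector `p(s,t) = (d(y s, y t), d(z s, z t)) ∈ ℝ²` has
Euclidean norm `|s - t|`. For `s ≤ t ≤ u`, the triangle inequalities in both factors together
with `u - s = (t - s) + (u - t)` put us in the equality case of Minkowski's inequality, which
forces `p(s,u) = p(s,t) + p(t,u)`. So `p(0,t)`, signed by the sign of `t`, is an isometric
embedding `ℝ → ℝ²`; as `ℝ²` is strictly convex it is affine, whence `p(s,t) = |s - t| • p(0,1)`.
-/

-- Minkowski gives `‖(a₁ + a₂, b₁ + b₂)‖ ≤ L₁ + L₂ = ‖(A, B)‖`, so both coordinate bounds are tight.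
theorem eq_add_of_sq_add_sq_eq_sq_add {A B a₁ b₁ a₂ b₂ L₁ L₂ : ℝ}
    (hA : 0 ≤ A) (hB : 0 ≤ B) (hL₁ : 0 ≤ L₁) (hL₂ : 0 ≤ L₂)
    (hAa : A ≤ a₁ + a₂) (hBb : B ≤ b₁ + b₂)
    (h₁ : a₁ ^ 2 + b₁ ^ 2 = L₁ ^ 2) (h₂ : a₂ ^ 2 + b₂ ^ 2 = L₂ ^ 2)
    (h : A ^ 2 + B ^ 2 = (L₁ + L₂) ^ 2) :
    A = a₁ + a₂ ∧ B = b₁ + b₂ := by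
  have cauchy_schwarz : a₁ * a₂ + b₁ * b₂ ≤ L₁ * L₂ := by
    nlinarith [sq_nonneg (a₁ * b₂ - a₂ * b₁), mul_nonneg hL₁ hL₂]
  have hA2 : A ^ 2 ≤ (a₁ + a₂) ^ 2 := pow_le_pow_left₀ hA hAa 2
  have hB2 : B ^ 2 ≤ (b₁ + b₂) ^ 2 := pow_le_pow_left₀ hB hBb 2
  constructor
  · exact (sq_eq_sq₀ hA (hA.trans hAa)).mp (by nlinarith)
  · exact (sq_eq_sq₀ hB (hB.trans hBb)).mp (by nlinarith)

section L2UnitSpeed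

variable {Y Z : Type*} [PseudoMetricSpace Y] [PseudoMetricSpace Z] (y : ℝ → Y) (z : ℝ → Z)

-- `t ↦ (y t, z t)` is a line for the ℓ²-combination of the two distances.
def IsL2UnitSpeed : Prop :=
  ∀ s t, dist (y s) (y t) ^ 2 + dist (z s) (z t) ^ 2 = (s - t) ^ 2

noncomputable def distPair (s t : ℝ) : EuclideanSpace ℝ (Fin 2) :=
  !₂[dist (y s) (y t), dist (z s) (z t)]

noncomputable def signedDistPair (t : ℝ) : EuclideanSpace ℝ (Fin 2) :=
  if 0 ≤ t then distPair y z 0 t else -distPair y z t 0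

variable {y z}

theorem norm_sq_distPair (s t : ℝ) :
    ‖distPair y z s t‖ ^ 2 = dist (y s) (y t) ^ 2 + dist (z s) (z t) ^ 2 := by
  simp [distPair, EuclideanSpace.norm_sq_eq, Fin.sum_univ_two]

theorem distPair_comm (s t : ℝ) : distPair y z t s = distPair y z s t := by
  simp only [distPair, dist_comm]

theorem distPair_add
    (hyz : IsL2UnitSpeed y z) {s t u : ℝ} (hst : s ≤ t) (htu : t ≤ u) :
    distPair y z s t + distPair y z t u = distPair y z s u := by
  obtain ⟨hy, hz⟩ := eq_add_of_sq_add_sq_eq_sq_add dist_nonneg dist_nonneg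
    (sub_nonneg.mpr hst) (sub_nonneg.mpr htu) (dist_triangle _ _ _) (dist_triangle _ _ _)
    ((hyz s t).trans (by ring)) ((hyz t u).trans (by ring)) ((hyz s u).trans (by ring))
  ext i
  fin_cases i <;> simp [distPair, hy, hz]

theorem signedDistPair_sub
    (hyz : IsL2UnitSpeed y z) {s t : ℝ} (hst : s ≤ t) :
    signedDistPair y z t - signedDistPair y z s = distPair y z s t := by
  unfold signedDistPair
  by_cases hs : 0 ≤ s
  · rw [if_pos (hs.trans hst), if_pos hs, ← distPair_add hyz hs hst, add_sub_cancel_left]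
  by_cases ht : 0 ≤ t
  · rw [if_pos ht, if_neg hs, sub_neg_eq_add, add_comm, distPair_add hyz (by linarith) ht]
  · rw [if_neg ht, if_neg hs, ← distPair_add hyz hst (by linarith)]
    abel

theorem isometry_signedDistPair (hyz : IsL2UnitSpeed y z) :
    Isometry (signedDistPair y z) := by
  refine Isometry.of_dist_eq fun s t => ?_
  wlog hst : s ≤ t generalizing s t
  · rw [dist_comm, this t s (le_of_not_ge hst), dist_comm]
  rw [dist_comm, dist_eq_norm, signedDistPair_sub hyz hst, Real.dist_eq]
  refine (sq_eq_sq₀ (norm_nonneg _) (abs_nonneg _)).mp ?_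
  rw [norm_sq_distPair, hyz, sq_abs]

theorem distPair_eq_smul
    (hyz : IsL2UnitSpeed y z) {s t : ℝ} (hst : s ≤ t) :
    distPair y z s t = (t - s) • distPair y z 0 1 := by
  set φ := (isometry_signedDistPair hyz).affineIsometryOfStrictConvexSpace
  have affine :
      ∀ a b, signedDistPair y z b - signedDistPair y z a = (b - a) • φ.linearIsometry 1 :=
    fun a b => by rw [← map_smul, smul_eq_mul, mul_one]; exact (φ.map_vsub b a).symm
  rw [← signedDistPair_sub hyz hst, ← signedDistPair_sub hyz zero_le_one, affine, affine,
    sub_zero, one_smul]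

theorem distPair_eq_abs_smul (hyz : IsL2UnitSpeed y z) (s t : ℝ) :
    distPair y z s t = |s - t| • distPair y z 0 1 := by
  rcases le_total s t with hst | hts
  · rw [abs_of_nonpos (sub_nonpos.mpr hst), neg_sub, distPair_eq_smul hyz hst]
  · rw [abs_of_nonneg (sub_nonneg.mpr hts), ← distPair_eq_smul hyz hts, distPair_comm]

end L2UnitSpeed

/-- the projections of a line in an ℓ²-product are constant speed
geodesics with speeds `α, β ≥ 0`, `α² + β² = 1`. -/
theorem line_projections_constant_speed {X Y Z : Type}
    [MetricSpace X] [MetricSpace Y] [MetricSpace Z]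
    (Φ : X → Y × Z) (hΦ : IsL2Prod Φ) (γ : ℝ → X) (hγ : Isometry γ) :
    ∃ α β : ℝ, 0 ≤ α ∧ 0 ≤ β ∧ α ^ 2 + β ^ 2 = 1 ∧
      (∀ s t : ℝ, dist (Φ (γ s)).1 (Φ (γ t)).1 = α * |s - t|) ∧
      (∀ s t : ℝ, dist (Φ (γ s)).2 (Φ (γ t)).2 = β * |s - t|) := by
  set y := fun t => (Φ (γ t)).1
  set z := fun t => (Φ (γ t)).2
  have hyz : IsL2UnitSpeed y z := fun s t => by
    rw [← hΦ.2, hγ.dist_eq, Real.dist_eq, sq_abs]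
  refine ⟨dist (y 0) (y 1), dist (z 0) (z 1), dist_nonneg, dist_nonneg, by simpa using hyz 0 1,
    fun s t => ?_, fun s t => ?_⟩
  · simpa [distPair, mul_comm] using congrArg (· 0) (distPair_eq_abs_smul hyz s t)
  · simpa [distPair, mul_comm] using congrArg (· 1) (distPair_eq_abs_smul hyz s t)
end

section
/- Let X = Y × Ȳ be an ℓ²-product of metric spaces and let γ₁, γ₂ : ℝ → X be isometric embeddings (lines) such that t ↦ d(γ₁(t), γ₂(t)) is constant (parallel lines). Then the projected geodesics P^Y ∘ γ₁ and P^Y ∘ γ₂ have the same constant speed: there is α ≥ 0 such that d(P^Y(γᵢ(s)), P^Y(γᵢ(t))) = α|s−t| for i = 1,2 and all s,t ∈ ℝ. -/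
/-!
The square of the `X`-distance along a line is `(s - t)²`, split as the sum of the squared
distances of its two projections. For `a < b < c` the triangle inequalities in `Y` and in `Z`
then force equality in Minkowski's inequality in `ℝ²`, so the two projected segments have
proportional lengths: each projection has constant speed. Two constant-speed curves at bounded
distance have the same speed, and parallel lines project to curves at bounded distance.
-/

/-- The equality case of Minkowski's inequality in `ℝ²`: `(p, p')` and `(q, q')` are parallel. -/
lemma mul_eq_mul_of_sq_add_sq_le {p p' q q' u v : ℝ} (hp : 0 ≤ p) (hq : 0 ≤ q)
    (hu : 0 ≤ u) (hv : 0 ≤ v) (hpu : p ^ 2 + p' ^ 2 = u ^ 2) (hqv : q ^ 2 + q' ^ 2 = v ^ 2)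
    (hle : (u + v) ^ 2 ≤ (p + q) ^ 2 + (p' + q') ^ 2) :
    p * v = q * u := by
  have hinner : u * v ≤ p * q + p' * q' := by linear_combination (hle + hpu + hqv) / 2
  have lagrange : (p * q + p' * q') ^ 2 + (p * q' - p' * q) ^ 2 = (u * v) ^ 2 := by
    rw [mul_pow, ← hpu, ← hqv]; ring
  have hcross : p * q' = p' * q := by
    have : (u * v) ^ 2 ≤ (p * q + p' * q') ^ 2 :=
      pow_le_pow_left₀ (mul_nonneg hu hv) hinner 2
    nlinarith [sq_nonneg (p * q' - p' * q)]
  refine (pow_left_inj₀ (mul_nonneg hp hv) (mul_nonneg hq hu) two_ne_zero).1 ?_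
  rw [mul_pow, mul_pow, ← hpu, ← hqv]
  linear_combination (p * q' + p' * q) * hcross

def HasConstSpeed {Y : Type*} [PseudoMetricSpace Y] (c : ℝ → Y) (α : ℝ) : Prop :=
  ∀ s t : ℝ, dist (c s) (c t) = α * |s - t|

lemma eq_mul_sub_of_mul_sub_eq (f : ℝ → ℝ → ℝ)
    (hf : ∀ a b c, a < b → b < c → f a b * (c - b) = f b c * (b - a)) {a b : ℝ} (hab : a < b) :
    f a b = f 0 1 * (b - a) := by
  have hratio : ∀ a b c, a < b → b < c → f a b / (b - a) = f b c / (c - b) := fun a b c hab hbc =>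
    (div_eq_div_iff (sub_ne_zero.2 hab.ne') (sub_ne_zero.2 hbc.ne')).2 (hf a b c hab hbc)
  -- Compare both `[a, b]` and `[0, 1]` with an interval `[c, c + 1]` lying to the right of them.
  set c := max b 1 + 1
  have hbc : b < c := by linarith [le_max_left b 1]
  have h1c : 1 < c := by linarith [le_max_right b 1]
  have key : f a b / (b - a) = f 0 1 / (1 - 0) := by
    rw [hratio a b c hab hbc, hratio b c (c + 1) hbc (lt_add_one c),
      ← hratio 1 c (c + 1) h1c (lt_add_one c), ← hratio 0 1 c one_pos h1c]
  rw [div_eq_iff (sub_ne_zero.2 hab.ne')] at key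
  simpa using key

section L2Curve

variable {Y Z : Type*} [PseudoMetricSpace Y] [PseudoMetricSpace Z] {y : ℝ → Y} {z : ℝ → Z}

lemma dist_mul_sub_eq_of_sq_dist_add_sq_dist
    (hd : ∀ s t, dist (y s) (y t) ^ 2 + dist (z s) (z t) ^ 2 = (s - t) ^ 2)
    {a b c : ℝ} (hab : a < b) (hbc : b < c) :
    dist (y a) (y b) * (c - b) = dist (y b) (y c) * (b - a) := by
  have hsq : ∀ s t, dist (y s) (y t) ^ 2 + dist (z s) (z t) ^ 2 = (t - s) ^ 2 :=
    fun s t => by rw [hd]; ring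
  refine mul_eq_mul_of_sq_add_sq_le dist_nonneg dist_nonneg (by linarith) (by linarith)
    (hsq a b) (hsq b c) ?_
  calc (b - a + (c - b)) ^ 2 = dist (y a) (y c) ^ 2 + dist (z a) (z c) ^ 2 := by
        rw [hsq a c]; ring
    _ ≤ (dist (y a) (y b) + dist (y b) (y c)) ^ 2 + (dist (z a) (z b) + dist (z b) (z c)) ^ 2 :=
        add_le_add (pow_le_pow_left₀ dist_nonneg (dist_triangle _ _ _) 2)
          (pow_le_pow_left₀ dist_nonneg (dist_triangle _ _ _) 2)

lemma hasConstSpeed_of_sq_dist_add_sq_dist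
    (hd : ∀ s t, dist (y s) (y t) ^ 2 + dist (z s) (z t) ^ 2 = (s - t) ^ 2) :
    HasConstSpeed y (dist (y 0) (y 1)) := by
  have hlt : ∀ {s t}, s < t → dist (y s) (y t) = dist (y 0) (y 1) * |s - t| := fun hst => by
    rw [abs_sub_comm, abs_of_pos (sub_pos.2 hst)]
    exact eq_mul_sub_of_mul_sub_eq (fun a b => dist (y a) (y b))
      (fun _ _ _ => dist_mul_sub_eq_of_sq_dist_add_sq_dist hd) hst
  intro s t
  rcases lt_trichotomy s t with hst | rfl | hst
  · exact hlt hst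
  · simp
  · rw [dist_comm, abs_sub_comm]; exact hlt hst

end L2Curve

lemma HasConstSpeed.eq_of_forall_dist_le {Y : Type*} [PseudoMetricSpace Y] {c₁ c₂ : ℝ → Y}
    {α₁ α₂ C : ℝ} (hc₁ : HasConstSpeed c₁ α₁) (hc₂ : HasConstSpeed c₂ α₂)
    (hC : ∀ t, dist (c₁ t) (c₂ t) ≤ C) : α₁ = α₂ := by
  have hbound : ∀ t, |α₁ - α₂| * |t| ≤ 2 * C := fun t => by
    calc |α₁ - α₂| * |t| = dist (dist (c₁ t) (c₁ 0)) (dist (c₂ t) (c₂ 0)) := by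
          rw [hc₁, hc₂, Real.dist_eq, sub_zero, ← sub_mul, abs_mul, abs_abs]
      _ ≤ dist (c₁ t) (c₂ t) + dist (c₁ 0) (c₂ 0) := dist_dist_dist_le _ _ _ _
      _ ≤ 2 * C := by linarith [hC t, hC 0]
  by_contra hne
  have hpos : 0 < |α₁ - α₂| := abs_pos.2 (sub_ne_zero.2 hne)
  have := hbound ((2 * C + 1) / |α₁ - α₂|)
  rw [abs_div, abs_abs, mul_div_cancel₀ _ hpos.ne'] at this
  linarith [le_abs_self (2 * C + 1)]

section L2Prod

variable {X Y Z : Type} [MetricSpace X] [MetricSpace Y] [MetricSpace Z] {Φ : X → Y × Z}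

lemma IsL2Prod.dist_fst_le (hΦ : IsL2Prod Φ) (p q : X) : dist (Φ p).1 (Φ q).1 ≤ dist p q :=
  (pow_le_pow_iff_left₀ dist_nonneg dist_nonneg two_ne_zero).1 <|
    (hΦ.2 p q).symm ▸ le_add_of_nonneg_right (sq_nonneg _)

lemma IsL2Prod.hasConstSpeed_fst_comp (hΦ : IsL2Prod Φ) {γ : ℝ → X} (hγ : Isometry γ) :
    HasConstSpeed (fun t => (Φ (γ t)).1) (dist (Φ (γ 0)).1 (Φ (γ 1)).1) :=
  hasConstSpeed_of_sq_dist_add_sq_dist (z := fun t => (Φ (γ t)).2) fun s t => by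
    rw [← hΦ.2, hγ.dist_eq, Real.dist_eq, sq_abs]

end L2Prod

/-- parallel lines in an ℓ²-product project onto geodesics of the
same constant speed. -/
theorem parallel_lines_same_projected_speed {X Y Z : Type}
    [MetricSpace X] [MetricSpace Y] [MetricSpace Z]
    (Φ : X → Y × Z) (hΦ : IsL2Prod Φ) (γ₁ γ₂ : ℝ → X)
    (h₁ : Isometry γ₁) (h₂ : Isometry γ₂)
    (hpar : ∀ t : ℝ, dist (γ₁ t) (γ₂ t) = dist (γ₁ 0) (γ₂ 0)) :
    ∃ α : ℝ, 0 ≤ α ∧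
      (∀ s t : ℝ, dist (Φ (γ₁ s)).1 (Φ (γ₁ t)).1 = α * |s - t|) ∧
      (∀ s t : ℝ, dist (Φ (γ₂ s)).1 (Φ (γ₂ t)).1 = α * |s - t|) := by
  have hspeed₁ := hΦ.hasConstSpeed_fst_comp h₁
  have hspeed₂ := hΦ.hasConstSpeed_fst_comp h₂
  have hsame := hspeed₁.eq_of_forall_dist_le hspeed₂ fun t =>
    (hΦ.dist_fst_le (γ₁ t) (γ₂ t)).trans (hpar t).le
  exact ⟨_, dist_nonneg, hspeed₁, hsame ▸ hspeed₂⟩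
end

section
/- Let X = Y × Ȳ be an ℓ²-product, let ℓ ⊂ X be a line, and suppose the projection P^Y(ℓ) is not a single point. Then P^Y(ℓ) is a line in Y (an isometric copy of ℝ), and the restriction P^Y : ℓ → P^Y(ℓ) is a bijection, indeed a similarity with factor α for some 0 < α ≤ 1. -/
open Set

lemma eq_add_and_mul_eq_of_sq_add_sq {a₁ b₁ a₂ b₂ a₃ b₃ c₁ c₂ : ℝ}
    (ha₁ : 0 ≤ a₁) (ha₂ : 0 ≤ a₂)
    (ha₃ : 0 ≤ a₃) (hb₃ : 0 ≤ b₃) (hc₁ : 0 < c₁) (hc₂ : 0 < c₂)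
    (h₁ : a₁ ^ 2 + b₁ ^ 2 = c₁ ^ 2) (h₂ : a₂ ^ 2 + b₂ ^ 2 = c₂ ^ 2)
    (h₃ : a₃ ^ 2 + b₃ ^ 2 = (c₁ + c₂) ^ 2) (ha : a₃ ≤ a₁ + a₂) (hb : b₃ ≤ b₁ + b₂) :
    a₃ = a₁ + a₂ ∧ a₁ * c₂ = a₂ * c₁ := by
  have cauchy_schwarz : a₁ * a₂ + b₁ * b₂ ≤ c₁ * c₂ := by
    nlinarith [sq_nonneg (a₁ * b₂ - a₂ * b₁), sq_nonneg (a₁ * a₂ + b₁ * b₂ - c₁ * c₂),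
      mul_pos hc₁ hc₂]
  have hA : a₃ ^ 2 ≤ (a₁ + a₂) ^ 2 := pow_le_pow_left₀ ha₃ ha 2
  have hB : b₃ ^ 2 ≤ (b₁ + b₂) ^ 2 := pow_le_pow_left₀ hb₃ hb 2
  have cauchy_schwarz_eq : a₁ * a₂ + b₁ * b₂ = c₁ * c₂ := by nlinarith
  have ha₃_sq : a₃ ^ 2 = (a₁ + a₂) ^ 2 := by nlinarith
  have cross : (a₁ * b₂ - a₂ * b₁) ^ 2 = 0 := by
    linear_combination (a₂ ^ 2 + b₂ ^ 2) * h₁ + c₁ ^ 2 * h₂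
      - (a₁ * a₂ + b₁ * b₂ + c₁ * c₂) * cauchy_schwarz_eq
  have hsq : (a₁ * c₂) ^ 2 = (a₂ * c₁) ^ 2 := by
    linear_combination a₂ ^ 2 * h₁ - a₁ ^ 2 * h₂
      + (a₁ * b₂ + a₂ * b₁) * sub_eq_zero.1 (pow_eq_zero_iff two_ne_zero |>.1 cross)
  exact ⟨(sq_eq_sq₀ ha₃ (add_nonneg ha₁ ha₂)).1 ha₃_sq,
    (sq_eq_sq₀ (mul_nonneg ha₁ hc₂.le) (mul_nonneg ha₂ hc₁.le)).1 hsq⟩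

section PythagoreanPair

variable {Y Z : Type} [MetricSpace Y] [MetricSpace Z] {f : ℝ → Y} {g : ℝ → Z}

lemma dist_div_sub_eq_of_lt_of_lt
    (h : ∀ t s, dist (f t) (f s) ^ 2 + dist (g t) (g s) ^ 2 = dist t s ^ 2)
    {t u s : ℝ} (htu : t < u) (hus : u < s) :
    dist (f t) (f u) / (u - t) = dist (f t) (f s) / (s - t) ∧
      dist (f u) (f s) / (s - u) = dist (f t) (f s) / (s - t) := by
  have hpyth : ∀ {t s}, t < s → dist (f t) (f s) ^ 2 + dist (g t) (g s) ^ 2 = (s - t) ^ 2 :=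
    fun {t s} hts => by rw [h, Real.dist_eq, abs_sub_comm, abs_of_pos (sub_pos.2 hts)]
  obtain ⟨hadd, hprop⟩ := eq_add_and_mul_eq_of_sq_add_sq dist_nonneg dist_nonneg
    dist_nonneg dist_nonneg (sub_pos.2 htu) (sub_pos.2 hus) (hpyth htu) (hpyth hus)
    (by rw [hpyth (htu.trans hus)]; ring) (dist_triangle _ (f u) _) (dist_triangle _ (g u) _)
  have hut : u - t ≠ 0 := (sub_pos.2 htu).ne'
  have hsu : s - u ≠ 0 := (sub_pos.2 hus).ne'
  have hst : s - t ≠ 0 := (sub_pos.2 (htu.trans hus)).ne'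
  constructor
  · rw [div_eq_div_iff hut hst, hadd]; linear_combination hprop
  · rw [div_eq_div_iff hsu hst, hadd]; linear_combination -hprop

lemma exists_dist_eq_mul_dist
    (h : ∀ t s, dist (f t) (f s) ^ 2 + dist (g t) (g s) ^ 2 = dist t s ^ 2) :
    ∃ α : ℝ, 0 ≤ α ∧ α ≤ 1 ∧ ∀ t s, dist (f t) (f s) = α * dist t s := by
  set σ : ℝ → ℝ → ℝ := fun t s => dist (f t) (f s) / (s - t)
  have hσ : ∀ t s, t < s → σ t s = σ 0 1 := by
    intro t s hts
    -- compare `[t, s]` and `[0, 1]` through a common interval `[m, M]` containing both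
    obtain ⟨m, hmt, hm0⟩ : ∃ m, m < t ∧ m < 0 := ⟨min t 0 - 1, by grind, by grind⟩
    obtain ⟨M, hsM, h1M⟩ : ∃ M, s < M ∧ 1 < M := ⟨max s 1 + 1, by grind, by grind⟩
    calc σ t s = σ t M := (dist_div_sub_eq_of_lt_of_lt h hts hsM).1
      _ = σ m M := (dist_div_sub_eq_of_lt_of_lt h hmt (hts.trans hsM)).2
      _ = σ 0 M := (dist_div_sub_eq_of_lt_of_lt h hm0 (zero_lt_one.trans h1M)).2.symm
      _ = σ 0 1 := (dist_div_sub_eq_of_lt_of_lt h zero_lt_one h1M).1.symm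
  have hlt : ∀ t s, t < s → dist (f t) (f s) = σ 0 1 * dist t s := by
    intro t s hts
    rw [← hσ t s hts, Real.dist_eq, abs_sub_comm, abs_of_pos (sub_pos.2 hts),
      div_mul_cancel₀ _ (sub_pos.2 hts).ne']
  have hα : σ 0 1 = dist (f 0) (f 1) := by simp [σ]
  refine ⟨σ 0 1, hα ▸ dist_nonneg, ?_, fun t s => ?_⟩
  · have h01 : dist (f 0) (f 1) ^ 2 + dist (g 0) (g 1) ^ 2 = 1 := by simpa using h 0 1
    rw [hα, ← pow_le_one_iff_of_nonneg dist_nonneg two_ne_zero]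
    nlinarith [sq_nonneg (dist (g 0) (g 1))]
  · rcases lt_trichotomy t s with hts | rfl | hst
    · exact hlt t s hts
    · simp
    · rw [dist_comm, hlt s t hst, dist_comm]

end PythagoreanPair

lemma isLine_range_of_dist_eq_mul_dist {Y : Type} [MetricSpace Y] {f : ℝ → Y} {α : ℝ}
    (hα : 0 < α) (hf : ∀ t s, dist (f t) (f s) = α * dist t s) : IsLine (range f) := by
  refine ⟨fun t => f (t / α), Isometry.of_dist_eq fun t s => ?_, ?_⟩
  · rw [hf, Real.dist_eq, Real.dist_eq, ← sub_div, abs_div, abs_of_pos hα,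
      mul_div_cancel₀ _ hα.ne']
  · exact Function.Surjective.range_comp (fun t => ⟨t * α, mul_div_cancel_right₀ t hα.ne'⟩) f

/-- if the projection of a line `ℓ ⊂ X = Y × Z` to `Y` is not a point,
then it is a line in `Y` and the projection restricted to `ℓ` is a bijective
similarity with factor `0 < α ≤ 1`. -/
theorem line_projection_line_or_point {X Y Z : Type}
    [MetricSpace X] [MetricSpace Y] [MetricSpace Z]
    (Φ : X → Y × Z) (hΦ : IsL2Prod Φ) (ℓ : Set X) (hℓ : IsLine ℓ)
    (hnp : ¬ ∃ y : Y, (fun p : X => (Φ p).1) '' ℓ = {y}) :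
    IsLine ((fun p : X => (Φ p).1) '' ℓ) ∧
    Set.InjOn (fun p : X => (Φ p).1) ℓ ∧
    ∃ α : ℝ, 0 < α ∧ α ≤ 1 ∧
      ∀ p ∈ ℓ, ∀ q ∈ ℓ, dist (Φ p).1 (Φ q).1 = α * dist p q := by
  obtain ⟨γ, hγ, rfl⟩ := hℓ
  have himage : (fun p => (Φ p).1) '' range γ = range fun t => (Φ (γ t)).1 :=
    (range_comp _ γ).symm
  obtain ⟨α, hα0, hα1, hf⟩ := exists_dist_eq_mul_dist
    (f := fun t => (Φ (γ t)).1) (g := fun t => (Φ (γ t)).2) fun t s => by rw [← hΦ.2, hγ.dist_eq]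
  have hαpos : 0 < α := by
    refine hα0.lt_of_ne fun hα => hnp ⟨(Φ (γ 0)).1, ?_⟩
    rw [himage, range_eq_singleton_iff]
    exact fun t => dist_eq_zero.1 (by rw [hf, ← hα, zero_mul])
  have hsim : ∀ p ∈ range γ, ∀ q ∈ range γ, dist (Φ p).1 (Φ q).1 = α * dist p q := by
    rintro _ ⟨t, rfl⟩ _ ⟨s, rfl⟩
    rw [hγ.dist_eq]
    exact hf t s
  refine ⟨himage ▸ isLine_range_of_dist_eq_mul_dist hαpos hf, fun p hp q hq hpq => ?_,
    α, hαpos, hα1, hsim⟩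
  have hpq' := hsim p hp q hq
  rw [show (Φ p).1 = (Φ q).1 from hpq, dist_self, eq_comm, mul_eq_zero] at hpq'
  exact dist_eq_zero.1 (hpq'.resolve_left hαpos.ne')
end

section
/- Let X be a complete metric space and x ∈ X, and let (A_α)_{α ∈ I} be a chain (totally ordered by inclusion) of factor subsets of X through x, each isometric to a real Hilbert space. Then the closure H of the union ⋃_α A_α is isometric to a real Hilbert space. -/
/-!
Base the union `U = ⋃ i, A i` at `x` and take its Gram kernel
`(d(x,p)² + d(x,q)² - d(p,q)²) / 2`. Every finite subset of `U` lies in a single `A i`, where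
the kernel is a genuine inner product, so it is positive semidefinite and `U` embeds
isometrically, with `x ↦ 0`, into the associated reproducing kernel Hilbert space `E`.
An isometry from a real normed space into a strictly convex one is affine, so each `A i`,
being isometric to a Hilbert space, lands on a linear subspace of `E`; the image of `U` is the
directed union of these, again a subspace. The embedding extends to an isometry from the
closure of `U` in the complete space `X` onto the closure of that subspace, a Hilbert space.
-/

open scoped RealInnerProductSpace
open Set

section GramKernel

variable {Y : Type} [PseudoMetricSpace Y]

noncomputable def gramKernel (y p q : Y) : ℝ :=
  (dist y p ^ 2 + dist y q ^ 2 - dist p q ^ 2) / 2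

lemma gramKernel_comm (y p q : Y) : gramKernel y p q = gramKernel y q p := by
  rw [gramKernel, gramKernel, dist_comm p q]
  ring

lemma gramKernel_eq_inner {H : Type} [NormedAddCommGroup H] [InnerProductSpace ℝ H]
    {s : Set Y} {f : Y → H} (hf : ∀ p ∈ s, ∀ q ∈ s, dist (f p) (f q) = dist p q)
    {y p q : Y} (hy : y ∈ s) (hp : p ∈ s) (hq : q ∈ s) :
    gramKernel y p q = ⟪f p - f y, f q - f y⟫ := by
  have hpq := norm_sub_sq_real (f p - f y) (f q - f y)
  rw [sub_sub_sub_cancel_right, ← dist_eq_norm, ← dist_eq_norm, ← dist_eq_norm, hf p hp q hq,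
    hf p hp y hy, hf q hq y hy] at hpq
  rw [gramKernel, dist_comm y p, dist_comm y q]
  linarith

/-- Scalars are encoded as multiples of the identity of `ℝ`, the form of kernel that
`RKHS.OfKernel` takes. -/
noncomputable def gramMatrix (y : Y) : Matrix Y Y (ℝ →L[ℝ] ℝ) :=
  .of fun p q => gramKernel y p q • 1

lemma isHermitian_gramMatrix (y : Y) : (gramMatrix y).IsHermitian :=
  Matrix.IsHermitian.ext fun p q => by simp [gramMatrix, gramKernel_comm y q p]

theorem posSemidef_gramMatrix (y : Y)
    (h : ∀ s : Finset Y, ∃ (H : Type) (_ : NormedAddCommGroup H) (_ : InnerProductSpace ℝ H)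
      (f : Y → H), ∀ p ∈ s, ∀ q ∈ s, dist (f p) (f q) = dist p q) :
    (gramMatrix y).PosSemidef := by
  have htfae := (RKHS.posSemidef_tfae (𝕜 := ℝ) (V := ℝ) (K := gramMatrix y)).out 0 2
  refine htfae.2 ⟨isHermitian_gramMatrix y, fun c => ?_⟩
  classical
  obtain ⟨H, _, _, f, hf⟩ := h (insert y c.support)
  have hy : y ∈ insert y c.support := Finset.mem_insert_self _ _
  have hc : ∀ p ∈ c.support, p ∈ insert y c.support := fun _ => Finset.mem_insert_of_mem
  let v : H := c.sum fun p a => a • (f p - f y)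
  calc (0 : ℝ) ≤ ⟪v, v⟫ := real_inner_self_nonneg
    _ = _ := by
      simp only [v, Finsupp.sum_inner, Finsupp.inner_sum, real_inner_smul_left,
        real_inner_smul_right, RCLike.re_to_real]
      refine Finsupp.sum_congr fun p hp => Finsupp.sum_congr fun q hq => ?_
      rw [← gramKernel_eq_inner hf hy (hc q hq) (hc p hp)]
      simp only [gramMatrix, Matrix.of_apply, smul_apply, one_apply_eq_self, smul_eq_mul,
        RCLike.inner_apply, Real.ringHom_apply]
      ring

variable (y : Y) [Fact (gramMatrix y).PosSemidef]

noncomputable def gramEmbedding (p : Y) : RKHS.OfKernel (gramMatrix y) :=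
  RKHS.kerFun _ p 1

lemma inner_gramEmbedding (p q : Y) :
    ⟪gramEmbedding y p, gramEmbedding y q⟫ = gramKernel y p q := by
  rw [gramEmbedding, gramEmbedding, ← RKHS.kernel_inner, RKHS.OfKernel.kernel_ofKernel]
  simp [gramMatrix, gramKernel_comm y q p]

lemma isometry_gramEmbedding : Isometry (gramEmbedding y) := by
  refine Isometry.of_dist_eq fun p q => ?_
  have hsq : dist (gramEmbedding y p) (gramEmbedding y q) ^ 2 = dist p q ^ 2 := by
    rw [dist_eq_norm, norm_sub_sq_real, ← real_inner_self_eq_norm_sq,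
      ← real_inner_self_eq_norm_sq, inner_gramEmbedding, inner_gramEmbedding,
      inner_gramEmbedding]
    simp only [gramKernel, dist_self]
    ring
  exact (sq_eq_sq₀ dist_nonneg dist_nonneg).1 hsq

lemma gramEmbedding_self : gramEmbedding y y = 0 := by
  rw [← norm_eq_zero, ← sq_eq_zero_iff (M₀ := ℝ), ← real_inner_self_eq_norm_sq,
    inner_gramEmbedding]
  simp [gramKernel]

end GramKernel

lemma Isometry.exists_submodule_coe_eq_range {F E : Type} [NormedAddCommGroup F]
    [NormedSpace ℝ F] [NormedAddCommGroup E] [NormedSpace ℝ E] [StrictConvexSpace ℝ E]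
    {k : F → E} (hk : Isometry k) (h0 : 0 ∈ range k) :
    ∃ M : Submodule ℝ E, (M : Set E) = range k := by
  obtain ⟨a, ha⟩ := h0
  let φ := hk.affineIsometryOfStrictConvexSpace.toAffineMap
  have hφ : ∀ v, φ.linear v = k (v + a) := fun v => by
    simpa [φ, ha] using φ.linearMap_vsub (v + a) a
  refine ⟨LinearMap.range φ.linear, Set.ext fun e => ⟨?_, ?_⟩⟩
  · rintro ⟨v, rfl⟩
    exact ⟨v + a, (hφ v).symm⟩
  · rintro ⟨v, rfl⟩
    exact ⟨v - a, by rw [hφ, sub_add_cancel]⟩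

lemma IsHilbertSubset.exists_submodule_coe_eq_range {X E : Type} [MetricSpace X]
    [NormedAddCommGroup E] [NormedSpace ℝ E] [StrictConvexSpace ℝ E] {A : Set X}
    (hA : IsHilbertSubset A) {k : A → E} (hk : Isometry k) (h0 : 0 ∈ range k) :
    ∃ M : Submodule ℝ E, (M : Set E) = range k := by
  obtain ⟨H, _, _, _, g, hg, hgs⟩ := hA
  have hinv := (Function.leftInverse_surjInv ⟨hg.injective, hgs⟩).rightInverse.surjective
  have hinv_iso : Isometry (Function.surjInv hgs) := Isometry.of_dist_eq fun a b => by
    rw [← hg.dist_eq, Function.surjInv_eq hgs, Function.surjInv_eq hgs]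
  rw [← hinv.range_comp k] at h0 ⊢
  exact (hk.comp hinv_iso).exists_submodule_coe_eq_range h0

section DirectedUnion

variable {X : Type} [MetricSpace X] {ι : Type} [Nonempty ι] {A : ι → Set X}

lemma exists_isometric_on_finset_of_directed (hdir : Directed (· ⊆ ·) A)
    (hA : ∀ i, IsHilbertSubset (A i)) (s : Finset (⋃ i, A i)) :
    ∃ (H : Type) (_ : NormedAddCommGroup H) (_ : InnerProductSpace ℝ H) (f : (⋃ i, A i) → H),
      ∀ p ∈ s, ∀ q ∈ s, dist (f p) (f q) = dist p q := by
  classical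
  obtain ⟨i, hi⟩ := hdir.exists_mem_subset_of_finset_subset_biUnion (s := s.image Subtype.val)
    fun _ hp => by
      obtain ⟨q, -, rfl⟩ := Finset.mem_image.1 (Finset.mem_coe.1 hp)
      exact q.2
  have hs : ∀ p ∈ s, (p : X) ∈ A i := fun p hp => hi (Finset.mem_image_of_mem _ hp)
  obtain ⟨H, _, _, _, g, hg, -⟩ := hA i
  let f : (⋃ i, A i) → H := fun p => Function.extend Subtype.val g 0 (p : X)
  have hf : ∀ p (hp : p ∈ s), f p = g ⟨p, hs p hp⟩ := fun p hp =>
    Subtype.val_injective.extend_apply g 0 ⟨p, hs p hp⟩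
  refine ⟨H, inferInstance, inferInstance, f, fun p hp q hq => ?_⟩
  rw [hf p hp, hf q hq, hg.dist_eq]
  rfl

lemma exists_submodule_coe_eq_range_of_directed {E : Type} [NormedAddCommGroup E]
    [NormedSpace ℝ E] [StrictConvexSpace ℝ E] (hdir : Directed (· ⊆ ·) A)
    (hA : ∀ i, IsHilbertSubset (A i)) {Φ : (⋃ i, A i) → E} (hΦ : Isometry Φ)
    {y : ⋃ i, A i} (hy : ∀ i, (y : X) ∈ A i) (hΦy : Φ y = 0) :
    ∃ M : Submodule ℝ E, (M : Set E) = range Φ := by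
  have hpiece : ∀ i, ∃ M : Submodule ℝ E,
      (M : Set E) = range (Φ ∘ Set.inclusion (subset_iUnion A i)) := fun i =>
    (hA i).exists_submodule_coe_eq_range (hΦ.comp fun _ _ => rfl) ⟨⟨y, hy i⟩, hΦy⟩
  choose M hM using hpiece
  have hmono : ∀ {i j}, A i ⊆ A j → M i ≤ M j := fun hij => by
    rw [← SetLike.coe_subset_coe, hM, hM]
    rintro _ ⟨a, rfl⟩
    exact ⟨Set.inclusion hij a, rfl⟩
  refine ⟨⨆ i, M i, ?_⟩
  rw [Submodule.coe_iSup_of_directed M fun i j =>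
    (hdir i j).imp fun _ hk => ⟨hmono hk.1, hmono hk.2⟩]
  ext e
  simp only [hM, mem_iUnion, mem_range, Function.comp_apply]
  constructor
  · rintro ⟨i, a, rfl⟩
    exact ⟨_, rfl⟩
  · rintro ⟨⟨p, hp⟩, rfl⟩
    obtain ⟨i, hi⟩ := mem_iUnion.1 hp
    exact ⟨i, ⟨p, hi⟩, rfl⟩

end DirectedUnion

theorem Isometry.exists_isometry_closure_range_eq {X E : Type} [MetricSpace X]
    [CompleteSpace X] [MetricSpace E] [CompleteSpace E] {U : Set X} {f : U → E}
    (hf : Isometry f) : ∃ F : closure U → E, Isometry F ∧ range F = closure (range f) := by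
  let j : U → closure U := Set.inclusion subset_closure
  have hj : Isometry j := fun _ _ => rfl
  have : CompleteSpace (closure U) := isClosed_closure.completeSpace_coe
  have hjd : DenseRange j := (denseRange_inclusion_iff subset_closure).2 fun _ h => h
  have di := hj.isUniformInducing.isDenseInducing hjd
  have hFc : Continuous (di.extend f) :=
    (uniformContinuous_uniformly_extend hj.isUniformInducing hjd hf.uniformContinuous).continuous
  have hFj : ∀ u, di.extend f (j u) = f u := di.extend_eq hf.continuous
  have hF : Isometry (di.extend f) := Isometry.of_dist_eq <|
    isClosed_property2 hjd (isClosed_eq (by fun_prop) continuous_dist) fun a b => by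
      rw [hFj, hFj, hf.dist_eq, hj.dist_eq]
  refine ⟨di.extend f, hF, (range_subset_iff.2 fun c => ?_).antisymm ?_⟩
  · exact hjd.induction_on c (isClosed_closure.preimage hFc) fun u =>
      subset_closure ⟨u, (hFj u).symm⟩
  · refine closure_minimal ?_ hF.isClosedEmbedding.isClosed_range
    rintro _ ⟨u, rfl⟩
    exact ⟨j u, hFj u⟩

lemma isHilbertSubset_of_isometry_of_coe_eq_range {X E : Type} [MetricSpace X]
    [NormedAddCommGroup E] [InnerProductSpace ℝ E] {A : Set X} (M : Submodule ℝ E)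
    [CompleteSpace M] {F : A → E} (hF : Isometry F) (hM : (M : Set E) = range F) :
    IsHilbertSubset A := by
  refine ⟨M, inferInstance, inferInstance, inferInstance,
    fun a => ⟨F a, hM.symm.subset (mem_range_self a)⟩, fun _ _ => hF _ _, ?_⟩
  rintro ⟨e, he⟩
  obtain ⟨a, rfl⟩ := hM.subset he
  exact ⟨a, rfl⟩

/-- the closure of the union of a chain of Hilbert factor subsets
through `x` is isometric to a Hilbert space. -/
theorem closure_chain_union_isHilbert {X : Type} [MetricSpace X] [CompleteSpace X]
    (x : X) {ι : Type} [Nonempty ι] (A : ι → Set X)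
    (hfac : ∀ i, IsFactorSubset (A i) x) (hHilb : ∀ i, IsHilbertSubset (A i))
    (hchain : ∀ i j, A i ⊆ A j ∨ A j ⊆ A i) :
    IsHilbertSubset (closure (⋃ i, A i)) := by
  have hx : ∀ i, x ∈ A i := fun i => (hfac i).1
  have hdir : Directed (· ⊆ ·) A := fun i j =>
    (hchain i j).elim (fun h => ⟨j, h, subset_rfl⟩) fun h => ⟨i, subset_rfl, h⟩
  let y : ⋃ i, A i := ⟨x, mem_iUnion.2 ⟨Classical.arbitrary ι, hx _⟩⟩
  have : Fact (gramMatrix y).PosSemidef :=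
    ⟨posSemidef_gramMatrix y (exists_isometric_on_finset_of_directed hdir hHilb)⟩
  obtain ⟨M, hM⟩ := exists_submodule_coe_eq_range_of_directed hdir hHilb
    (isometry_gramEmbedding y) hx (gramEmbedding_self y)
  obtain ⟨F, hF, hFrange⟩ := (isometry_gramEmbedding y).exists_isometry_closure_range_eq
  exact isHilbertSubset_of_isometry_of_coe_eq_range M.topologicalClosure hF
    (by rw [hFrange, ← hM, Submodule.topologicalClosure_coe])
end

section
/- Let X be a complete metric space, x ∈ X, and let (A_α) be a chain of factor subsets through x ordered by inclusion, with nearest-point projections π_α = π_{A_α}. Then for each p ∈ X the net (π_α(p)) is Cauchy: whenever A_α ⊂ A_β one has π_α(π_β(p)) = π_α(p) and d(p, π_β(p))² + d(π_α(p), π_β(p))² = d(p, π_α(p))², so the numbers d(p, π_α(p)) decrease and the points π_α(p) converge to the nearest point of p on the closure H of ⋃_α A_α. -/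
open Filter Topology Set

section Pythagoras

variable {X : Type} [MetricSpace X]

def IsPythagoreanProj (A : Set X) (π : X → X) : Prop :=
  ∀ p, ∀ a ∈ A, dist p a ^ 2 = dist p (π p) ^ 2 + dist (π p) a ^ 2

theorem IsNearestPointProj.apply_eq_of_forall_dist_sq {A : Set X} {π : X → X}
    (hπ : IsNearestPointProj A π) {p r : X} (hr : r ∈ A)
    (h : ∀ a ∈ A, dist p a ^ 2 = dist p r ^ 2 + dist r a ^ 2) : π p = r := by
  obtain ⟨hπA, hπmin, hπuniq⟩ := hπ p
  have hle : dist p r ≤ dist p (π p) :=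
    (pow_le_pow_iff_left₀ dist_nonneg dist_nonneg two_ne_zero).1 <| by
      linarith [h _ hπA, sq_nonneg (dist r (π p))]
  exact (hπuniq r hr (le_antisymm (hπmin r hr) hle).symm).symm

theorem IsFactorSubset.isPythagoreanProj {A : Set X} {x : X} (hA : IsFactorSubset A x)
    {π : X → X} (hπ : IsNearestPointProj A π) : IsPythagoreanProj A π := by
  obtain ⟨-, Y, Z, _, _, Φ, ⟨hΦ, hdist⟩, rfl⟩ := hA
  intro p
  obtain ⟨q, hq⟩ := hΦ.2 ((Φ p).1, (Φ x).2)
  have hpyth : ∀ a ∈ {y | (Φ y).2 = (Φ x).2}, dist p a ^ 2 = dist p q ^ 2 + dist q a ^ 2 := by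
    intro a (ha : (Φ a).2 = (Φ x).2)
    rw [hdist p a, hdist p q, hdist q a, hq, ha]
    simp [add_comm]
  rwa [hπ.apply_eq_of_forall_dist_sq (show (Φ q).2 = (Φ x).2 by rw [hq]) hpyth]

theorem IsNearestPointProj.apply_apply_eq_of_subset {A B : Set X} {πA πB : X → X}
    (hA : IsNearestPointProj A πA) (hpA : IsPythagoreanProj A πA)
    (hpB : IsPythagoreanProj B πB) (hAB : A ⊆ B) (p : X) : πA (πB p) = πA p := by
  refine (hA.apply_eq_of_forall_dist_sq (hA _).1 fun a ha => ?_).symm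
  linarith [hpB p a (hAB ha), hpA (πB p) a ha, hpB p _ (hAB (hA (πB p)).1)]

end Pythagoras

section Chain

variable {α ι : Type*} {A : ι → Set α}

variable (A) in
/-- The `atTop` filter of the preorder on `ι` pulled back from inclusion of the sets `A i`. -/
def atTopAlong : Filter ι := ⨅ i, 𝓟 {j | A i ⊆ A j}

theorem directed_principal_setOf_subset (hchain : ∀ i j, A i ⊆ A j ∨ A j ⊆ A i) :
    Directed (· ≥ ·) fun i => 𝓟 {j | A i ⊆ A j} := by
  intro i i'
  rcases hchain i i' with h | h
  · exact ⟨i', principal_mono.2 fun j hj => h.trans hj, le_rfl⟩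
  · exact ⟨i, le_rfl, principal_mono.2 fun j hj => h.trans hj⟩

variable [Nonempty ι]

theorem mem_atTopAlong_iff (hchain : ∀ i j, A i ⊆ A j ∨ A j ⊆ A i) {s : Set ι} :
    s ∈ atTopAlong A ↔ ∃ i, ∀ j, A i ⊆ A j → j ∈ s := by
  simp only [atTopAlong, mem_iInf_of_directed (directed_principal_setOf_subset hchain),
    mem_principal]
  rfl

theorem atTopAlong_neBot (hchain : ∀ i j, A i ⊆ A j ∨ A j ⊆ A i) : (atTopAlong A).NeBot :=
  iInf_neBot_of_directed' (directed_principal_setOf_subset hchain) fun i =>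
    principal_neBot_iff.2 ⟨i, subset_refl (A i)⟩

theorem exists_forall_dist_lt_of_dist_sq_le_sub {X : Type*} [PseudoMetricSpace X]
    (hchain : ∀ i j, A i ⊆ A j ∨ A j ⊆ A i) {q : ι → X} {e : ι → ℝ} (he : BddBelow (range e))
    (hqe : ∀ i j, A i ⊆ A j → dist (q i) (q j) ^ 2 ≤ e i - e j) {ε : ℝ} (hε : 0 < ε) :
    ∃ i, ∀ j k, A i ⊆ A j → A i ⊆ A k → dist (q j) (q k) < ε := by
  obtain ⟨i, hi⟩ := exists_lt_of_ciInf_lt (lt_add_of_pos_right (⨅ i, e i) (pow_pos hε 2))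
  have hnested : ∀ j k, A i ⊆ A j → A j ⊆ A k → dist (q j) (q k) < ε := fun j k hij hjk =>
    (pow_lt_pow_iff_left₀ dist_nonneg hε.le two_ne_zero).1 <| by
      linarith [hqe i j hij, hqe j k hjk, ciInf_le he k, sq_nonneg (dist (q i) (q j))]
  refine ⟨i, fun j k hj hk => ?_⟩
  rcases hchain j k with hjk | hkj
  · exact hnested j k hj hjk
  · exact dist_comm (q j) (q k) ▸ hnested k j hk hkj

theorem exists_tendsto_atTopAlong {X : Type*} [PseudoMetricSpace X] [CompleteSpace X]
    (hchain : ∀ i j, A i ⊆ A j ∨ A j ⊆ A i) {q : ι → X}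
    (hq : ∀ ε > 0, ∃ i, ∀ j k, A i ⊆ A j → A i ⊆ A k → dist (q j) (q k) < ε) :
    ∃ m, Tendsto q (atTopAlong A) (𝓝 m) := by
  have := atTopAlong_neBot hchain
  refine CompleteSpace.complete (Metric.cauchy_iff.2 ⟨inferInstance, fun ε hε => ?_⟩)
  obtain ⟨i, hi⟩ := hq ε hε
  refine ⟨q '' {j | A i ⊆ A j}, image_mem_map ((mem_atTopAlong_iff hchain).2 ⟨i, fun _ => id⟩),
    ?_⟩
  rintro _ ⟨j, hj, rfl⟩ _ ⟨k, hk, rfl⟩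
  exact hi j k hj hk

theorem dist_le_of_tendsto_atTopAlong {X : Type} [MetricSpace X] {A : ι → Set X}
    {π : ι → X → X} (hπ : ∀ i, IsNearestPointProj (A i) (π i))
    (hchain : ∀ i j, A i ⊆ A j ∨ A j ⊆ A i) {p m : X}
    (hm : Tendsto (fun i => π i p) (atTopAlong A) (𝓝 m)) {a : X}
    (ha : a ∈ closure (⋃ i, A i)) : dist p m ≤ dist p a := by
  have := atTopAlong_neBot hchain
  refine closure_minimal (t := {a | dist p m ≤ dist p a}) (fun a ha => ?_)
    (isClosed_le continuous_const (continuous_const.dist continuous_id)) ha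
  obtain ⟨i, hai⟩ := mem_iUnion.1 ha
  exact le_of_tendsto (tendsto_const_nhds.dist hm)
    ((mem_atTopAlong_iff hchain).2 ⟨i, fun j hij => (hπ j p).2.1 a (hij hai)⟩)

end Chain

theorem chain_projections_converge_general {X : Type} [MetricSpace X] [CompleteSpace X]
    (x : X) {ι : Type} [Nonempty ι] (A : ι → Set X)
    (hfac : ∀ i, IsFactorSubset (A i) x)
    (hchain : ∀ i j, A i ⊆ A j ∨ A j ⊆ A i)
    (π : ι → X → X) (hπ : ∀ i, IsNearestPointProj (A i) (π i)) (p : X) :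
    (∀ i j, A i ⊆ A j → π i (π j p) = π i p ∧
        dist p (π j p) ^ 2 + dist (π i p) (π j p) ^ 2 = dist p (π i p) ^ 2) ∧
    (∀ i j, A i ⊆ A j → dist p (π j p) ≤ dist p (π i p)) ∧
    (∀ ε > (0 : ℝ), ∃ i, ∀ j k, A i ⊆ A j → A i ⊆ A k →
        dist (π j p) (π k p) < ε) ∧
    ∃ m ∈ closure (⋃ i, A i),
      (∀ a ∈ closure (⋃ i, A i), dist p m ≤ dist p a) ∧
      ∀ ε > (0 : ℝ), ∃ i, ∀ j, A i ⊆ A j → dist (π j p) m < ε := by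
  have hpyth i : IsPythagoreanProj (A i) (π i) := (hfac i).isPythagoreanProj (hπ i)
  have hnested : ∀ i j, A i ⊆ A j → π i (π j p) = π i p ∧
      dist p (π j p) ^ 2 + dist (π i p) (π j p) ^ 2 = dist p (π i p) ^ 2 := fun i j hij =>
    ⟨(hπ i).apply_apply_eq_of_subset (hpyth i) (hpyth j) hij p,
      by rw [hpyth j p _ (hij (hπ i p).1), dist_comm (π i p)]⟩
  have hmono : ∀ i j, A i ⊆ A j → dist p (π j p) ≤ dist p (π i p) := fun i j hij =>
    (pow_le_pow_iff_left₀ dist_nonneg dist_nonneg two_ne_zero).1 <| by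
      linarith [(hnested i j hij).2, sq_nonneg (dist (π i p) (π j p))]
  have hcauchy : ∀ ε > (0 : ℝ), ∃ i, ∀ j k, A i ⊆ A j → A i ⊆ A k →
      dist (π j p) (π k p) < ε := fun ε hε =>
    exists_forall_dist_lt_of_dist_sq_le_sub hchain (e := fun i => dist p (π i p) ^ 2)
      ⟨0, by rintro _ ⟨i, rfl⟩; positivity⟩ (fun i j hij => by linarith [(hnested i j hij).2]) hε
  obtain ⟨m, hm⟩ := exists_tendsto_atTopAlong hchain hcauchy
  have := atTopAlong_neBot hchain
  exact ⟨hnested, hmono, hcauchy, m,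
    mem_closure_of_tendsto hm (Eventually.of_forall fun i => mem_iUnion_of_mem i (hπ i p).1),
    fun a ha => dist_le_of_tendsto_atTopAlong hπ hchain hm ha,
    fun ε hε => (mem_atTopAlong_iff hchain).1 (Metric.tendsto_nhds.1 hm ε hε)⟩

/-- along a chain of Hilbert factor subsets through `x`, the
nearest-point projections of any point `p` satisfy the Pythagorean compatibility
relations, form a Cauchy net, and converge to the nearest point of `p` on the
closure `H` of the union. -/
theorem chain_projections_converge {X : Type} [MetricSpace X] [CompleteSpace X]
    (x : X) {ι : Type} [Nonempty ι] (A : ι → Set X)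
    (hfac : ∀ i, IsFactorSubset (A i) x) (hHilb : ∀ i, IsHilbertSubset (A i))
    (hchain : ∀ i j, A i ⊆ A j ∨ A j ⊆ A i)
    (π : ι → X → X) (hπ : ∀ i, IsNearestPointProj (A i) (π i)) (p : X) :
    (∀ i j, A i ⊆ A j → π i (π j p) = π i p ∧
        dist p (π j p) ^ 2 + dist (π i p) (π j p) ^ 2 = dist p (π i p) ^ 2) ∧
    (∀ i j, A i ⊆ A j → dist p (π j p) ≤ dist p (π i p)) ∧
    (∀ ε > (0 : ℝ), ∃ i, ∀ j k, A i ⊆ A j → A i ⊆ A k →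
        dist (π j p) (π k p) < ε) ∧
    ∃ m ∈ closure (⋃ i, A i),
      (∀ a ∈ closure (⋃ i, A i), dist p m ≤ dist p a) ∧
      ∀ ε > (0 : ℝ), ∃ i, ∀ j, A i ⊆ A j → dist (π j p) m < ε :=
  chain_projections_converge_general x A hfac hchain π hπ p
end

section
/- (Projection of a splitting line onto a factor) Let X be a metric space, x ∈ X, Y a factor subset of X through x, and ℓ a splitting line of X through x. Then π_Y(ℓ) is either a single point or a splitting line in Y. -/
/-
Write `X = Y₀ × Z` for the product in which `Y` is the fiber through `x`, so that `π_Y = P` and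
`Q` is the `Z`-coordinate, and let `T` be the translation along the `ℝ`-factor split off by `ℓ`,
with coordinate `B`. The components `t ↦ P (T t x)` and `t ↦ Q (T t x)` of the line are linearly
reparametrized lines, of speeds `c` and `√(1 - c²)`, since otherwise Minkowski's inequality would
be strict. If `c = 0` the projection is the point `x`. Otherwise distances to these component
lines are explicit quadratics in `t`, and comparing leading coefficients shows that `B` is
`c`-Lipschitz on `Y` and `B - B ∘ P` is `√(1 - c²)`-Lipschitz in `Q`; equality in the Pythagorean
decomposition of `dist (T σ p) p = |σ|` then forces `B (P (T σ p)) = B p + c² σ`. So on `Y` the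
function `(B - B x) / c` is moved at unit speed by the flow `P ∘ T_{τ / c}`, which contracts as in
an `ℓ²` product, and such a flow splits `Y` as `ℝ × {B = B x}` with the projected line as the
`ℝ`-fiber through `x`.
-/

theorem nonneg_of_forall_quadratic_nonneg {a b c : ℝ} (h : ∀ t : ℝ, 0 ≤ a * t ^ 2 + b * t + c) :
    0 ≤ a := by
  by_contra! ha
  have hc : 0 ≤ c := by simpa using h 0
  -- at `t = c / -a + 1` the even part `a t² + c` of the quadratic is already negative
  obtain ⟨t, rfl⟩ : ∃ t, c = -a * (t - 1) :=
    ⟨c / -a + 1, by rw [add_sub_cancel_right, mul_div_cancel₀ _ (by linarith)]⟩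
  have ht : 1 ≤ t := by nlinarith
  nlinarith [h t, h (-t)]

theorem minkowski_eq_of_le {a₁ b₁ a₂ b₂ a₃ b₃ α β : ℝ}
    (ha₁ : 0 ≤ a₁) (hb₁ : 0 ≤ b₁) (ha₂ : 0 ≤ a₂) (hb₂ : 0 ≤ b₂) (ha₃ : 0 ≤ a₃) (hb₃ : 0 ≤ b₃)
    (hα : 0 < α) (hβ : 0 < β) (h₁ : a₁ ^ 2 + b₁ ^ 2 = α ^ 2) (h₂ : a₂ ^ 2 + b₂ ^ 2 = β ^ 2)
    (h₃ : a₃ ^ 2 + b₃ ^ 2 = (α + β) ^ 2) (ha : a₃ ≤ a₁ + a₂) (hb : b₃ ≤ b₁ + b₂) :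
    a₁ * β = a₂ * α ∧ a₃ = a₁ + a₂ := by
  -- Cauchy–Schwarz `a₁a₂ + b₁b₂ ≤ αβ` must be an equality, forcing `(a₁, b₁) ∥ (a₂, b₂)`.
  have hinner : a₁ * a₂ + b₁ * b₂ = α * β := by
    refine le_antisymm ?_ (by nlinarith)
    refine abs_le_of_sq_le_sq' ?_ (by positivity) |>.2
    nlinarith [sq_nonneg (a₁ * b₂ - a₂ * b₁)]
  have hpar : a₁ * b₂ = a₂ * b₁ := by nlinarith [sq_nonneg (a₁ * b₂ - a₂ * b₁)]
  refine ⟨?_, by nlinarith⟩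
  have : α * (a₂ * α - a₁ * β) = 0 := by
    linear_combination (-a₂) * h₁ + a₁ * hinner - b₁ * hpar
  linarith [(mul_eq_zero.mp this).resolve_left hα.ne']

theorem eq_mul_of_sq_le_mul {a b δ σ κ : ℝ} (hκ₀ : 0 ≤ κ) (hκ₁ : κ ≤ 1)
    (ha : δ ^ 2 ≤ κ * a) (hb : (σ - δ) ^ 2 ≤ (1 - κ) * b) (hab : a + b = σ ^ 2) :
    δ = κ * σ := by
  have hab' := congrArg (κ * (1 - κ) * ·) hab
  have : (δ - κ * σ) ^ 2 ≤ 0 := by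
    nlinarith [mul_le_mul_of_nonneg_left ha (sub_nonneg.2 hκ₁), mul_le_mul_of_nonneg_left hb hκ₀]
  linarith [pow_eq_zero_iff (n := 2) two_ne_zero |>.1 (le_antisymm this (sq_nonneg _))]

theorem abs_dist_sq_add_dist_sq_sub_dist_sq_le {M : Type*} [PseudoMetricSpace M] (p q r : M) :
    |dist p r ^ 2 + dist q r ^ 2 - dist p q ^ 2| ≤ 2 * dist p r * dist q r := by
  have h₁ := abs_le.1 (abs_dist_sub_le p q r)
  have h₂ := dist_triangle_right p q r
  rw [abs_le]
  constructor <;> nlinarith [dist_nonneg (x := p) (y := q), dist_nonneg (x := p) (y := r),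
    dist_nonneg (x := q) (y := r)]

theorem sq_sub_le_of_dist_sq_eq_quadratic {M : Type*} [PseudoMetricSpace M] (u : ℝ → M)
    {p q : M} {α β β' γ γ' : ℝ} (hp : ∀ t, dist p (u t) ^ 2 = α * t ^ 2 + β * t + γ)
    (hq : ∀ t, dist q (u t) ^ 2 = α * t ^ 2 + β' * t + γ') :
    (β - β') ^ 2 ≤ 4 * α * dist p q ^ 2 := by
  set d := dist p q ^ 2
  have key : ∀ t : ℝ, 0 ≤ (4 * α * d - (β - β') ^ 2) * t ^ 2
      + (2 * d * (β + β') - 2 * (β - β') * (γ - γ')) * t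
      + (2 * d * (γ + γ') - (γ - γ') ^ 2 - d ^ 2) := by
    intro t
    have h := abs_le.1 (abs_dist_sq_add_dist_sq_sub_dist_sq_le p q (u t))
    have h' := sq_le_sq' h.1 h.2
    rw [hp, hq] at h'
    nlinarith [hp t, hq t]
  linarith [nonneg_of_forall_quadratic_nonneg key]

section LinearComponents

variable {M N : Type*} [PseudoMetricSpace M] [PseudoMetricSpace N] {f : ℝ → M} {g : ℝ → N}

theorem dist_div_sub_eq_of_dist_sq_add_dist_sq_eq
    (h : ∀ s t, dist (f s) (f t) ^ 2 + dist (g s) (g t) ^ 2 = (s - t) ^ 2)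
    {s t u : ℝ} (hst : s < t) (htu : t < u) :
    dist (f s) (f t) / (t - s) = dist (f s) (f u) / (u - s) ∧
      dist (f t) (f u) / (u - t) = dist (f s) (f u) / (u - s) := by
  have h₁ : dist (f s) (f t) ^ 2 + dist (g s) (g t) ^ 2 = (t - s) ^ 2 := by
    rw [h]; ring
  have h₂ : dist (f t) (f u) ^ 2 + dist (g t) (g u) ^ 2 = (u - t) ^ 2 := by
    rw [h]; ring
  have h₃ : dist (f s) (f u) ^ 2 + dist (g s) (g u) ^ 2 = (t - s + (u - t)) ^ 2 := by
    rw [h]; ring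
  obtain ⟨hratio, hadd⟩ := minkowski_eq_of_le dist_nonneg dist_nonneg dist_nonneg dist_nonneg
    dist_nonneg dist_nonneg (sub_pos.2 hst) (sub_pos.2 htu) h₁ h₂ h₃
    (dist_triangle _ _ _) (dist_triangle _ _ _)
  have hts : t - s ≠ 0 := (sub_pos.2 hst).ne'
  have hut : u - t ≠ 0 := (sub_pos.2 htu).ne'
  have hus : u - s ≠ 0 := by linarith
  rw [hadd, div_eq_div_iff hts hus, div_eq_div_iff hut hus]
  exact ⟨by linear_combination hratio, by linear_combination -hratio⟩

theorem dist_eq_mul_abs_of_dist_sq_add_dist_sq_eq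
    (h : ∀ s t, dist (f s) (f t) ^ 2 + dist (g s) (g t) ^ 2 = (s - t) ^ 2) (s t : ℝ) :
    dist (f s) (f t) = dist (f 0) (f 1) * |s - t| := by
  set r : ℝ → ℝ → ℝ := fun s t => dist (f s) (f t) / (t - s)
  have hr : ∀ {s t u : ℝ}, s < t → t < u → r s t = r s u ∧ r t u = r s u :=
    dist_div_sub_eq_of_dist_sq_add_dist_sq_eq h
  -- any two ordered pairs are compared through an enclosing pair `m < M`
  have hconst : ∀ s t, s < t → dist (f s) (f t) = dist (f 0) (f 1) * (t - s) := by
    intro s t hst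
    have hm := min_le_left s 0
    have hm' := min_le_right s 0
    have hM := le_max_left t 1
    have hM' := le_max_right t 1
    have : r s t = r 0 1 :=
      calc r s t = r s (max t 1 + 1) := (hr hst (by linarith)).1
        _ = r (min s 0 - 1) (max t 1 + 1) := (hr (by linarith) (by linarith)).2
        _ = r 0 (max t 1 + 1) := (hr (by linarith) (by linarith)).2.symm
        _ = r 0 1 := (hr zero_lt_one (by linarith)).1.symm
    simpa [r, div_eq_iff (sub_pos.2 hst).ne'] using this
  rcases lt_trichotomy s t with hst | rfl | hts
  · rw [hconst s t hst, abs_sub_comm, abs_of_pos (sub_pos.2 hst)]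
  · simp
  · rw [dist_comm, hconst t s hts, abs_of_pos (sub_pos.2 hts)]

end LinearComponents

theorem IsNearestPointProj.apply_eq {X : Type} [MetricSpace X] {A : Set X} {π : X → X}
    (hπ : IsNearestPointProj A π) {r q : X} (hq : q ∈ A) (hmin : ∀ a ∈ A, dist r q ≤ dist r a) :
    π r = q :=
  ((hπ r).2.2 q hq (le_antisymm (hmin _ (hπ r).1) ((hπ r).2.1 q hq))).symm

theorem isSplittingLine_of_image_eq {M N : Type} [MetricSpace M] [MetricSpace N]
    {Φ : M → ℝ × N} (hΦ : IsL2Prod Φ) {S : Set M} {z : N} (hS : Φ '' S = Set.univ ×ˢ {z}) :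
    IsSplittingLine S := by
  refine ⟨⟨fun t => (Equiv.ofBijective Φ hΦ.1).symm (t, z), ?_, ?_⟩, N, _, Φ, z, hΦ, hS⟩
  · refine Isometry.of_dist_eq fun s t => ?_
    have h := hΦ.2 ((Equiv.ofBijective Φ hΦ.1).symm (s, z))
      ((Equiv.ofBijective Φ hΦ.1).symm (t, z))
    simp only [Equiv.ofBijective_apply_symm_apply, dist_self] at h
    exact (pow_left_inj₀ dist_nonneg dist_nonneg two_ne_zero).1 (by linarith)
  · ext p
    rw [← hΦ.1.1.mem_set_image (s := S), hS]
    constructor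
    · rintro ⟨t, rfl⟩
      simp [Equiv.ofBijective_apply_symm_apply]
    · rintro ⟨-, hp⟩
      exact ⟨(Φ p).1, (Equiv.ofBijective Φ hΦ.1).symm_apply_eq.2 (Prod.ext rfl hp.symm)⟩

structure IsSplittingFlow {M : Type} [MetricSpace M] (b : M → ℝ) (F : ℝ → M → M) : Prop where
  zero : ∀ p, F 0 p = p
  apply_flow : ∀ σ p, b (F σ p) = b p + σ
  dist_sq_le : ∀ s t p q,
    dist (F s p) (F t q) ^ 2 ≤ dist p q ^ 2 - 2 * (t - s) * (b p - b q) + (t - s) ^ 2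

namespace IsSplittingFlow

variable {M : Type} [MetricSpace M] {b : M → ℝ} {F : ℝ → M → M}

theorem neg_apply (hF : IsSplittingFlow b F) (σ : ℝ) (p : M) : F (-σ) (F σ p) = p := by
  have h₁ := hF.dist_sq_le σ 0 p p
  have h₂ := hF.dist_sq_le (-σ) 0 (F σ p) p
  rw [hF.zero] at h₁ h₂
  rw [hF.apply_flow] at h₂
  simp only [dist_self] at h₁
  have : dist (F (-σ) (F σ p)) p ^ 2 ≤ 0 := by nlinarith
  exact dist_eq_zero.1 ((sq_nonpos_iff _).1 this)

theorem dist_sq_eq (hF : IsSplittingFlow b F) (p q : M) :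
    dist p q ^ 2 = (b p - b q) ^ 2 + dist (F (-b p) p) (F (-b q) q) ^ 2 := by
  have hle := hF.dist_sq_le (-b p) (-b q) p q
  have hge := hF.dist_sq_le (b p) (b q) (F (-b p) p) (F (-b q) q)
  have hp : F (b p) (F (-b p) p) = p := by simpa using hF.neg_apply (-b p) p
  have hq : F (b q) (F (-b q) q) = q := by simpa using hF.neg_apply (-b q) q
  rw [hp, hq, hF.apply_flow, hF.apply_flow] at hge
  nlinarith

theorem isL2Prod (hF : IsSplittingFlow b F) :
    IsL2Prod fun p => (b p, (⟨F (-b p) p, by simp [hF.apply_flow]⟩ : {q // b q = 0})) := by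
  refine ⟨⟨fun p q hpq => ?_, fun ⟨t, z⟩ => ⟨F t z, ?_⟩⟩, fun p q => ?_⟩
  · obtain ⟨h₁, h₂⟩ := Prod.mk.inj hpq
    have h₂' : F (-b p) p = F (-b q) q := congrArg Subtype.val h₂
    have := hF.dist_sq_eq p q
    rw [h₂', dist_self, h₁, sub_self] at this
    exact dist_eq_zero.1 (pow_eq_zero_iff two_ne_zero |>.1 (by simpa using this))
  · have hbt : b (F t z) = t := by rw [hF.apply_flow, z.2, zero_add]
    ext
    · exact hbt
    · simp only [hbt, hF.neg_apply]
  · rw [Real.dist_eq, sq_abs, Subtype.dist_eq]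
    exact hF.dist_sq_eq p q

theorem isSplittingLine_range (hF : IsSplittingFlow b F) {z : M} (hz : b z = 0) :
    IsSplittingLine (Set.range fun τ => F τ z) := by
  refine isSplittingLine_of_image_eq hF.isL2Prod (z := ⟨z, hz⟩) ?_
  ext ⟨t, w⟩
  simp only [← Set.range_comp, Function.comp_def, hF.apply_flow, hz, zero_add, hF.neg_apply,
    Set.mem_range, Set.mem_prod, Set.mem_univ, Set.mem_singleton_iff, true_and, Prod.mk.injEq]
  constructor
  · rintro ⟨τ, rfl, rfl⟩
    rfl
  · rintro rfl
    exact ⟨t, rfl, rfl⟩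

end IsSplittingFlow

structure IsOrthogonalRetraction {X Z : Type} [MetricSpace X] [MetricSpace Z] (Y : Set X)
    (P : X → X) (Q : X → Z) : Prop where
  mem : ∀ r, P r ∈ Y
  apply_of_mem : ∀ p ∈ Y, P p = p
  dist_sq : ∀ r r', dist r r' ^ 2 = dist (P r) (P r') ^ 2 + dist (Q r) (Q r') ^ 2

structure IsTranslationFlow {X : Type} [MetricSpace X] (B : X → ℝ) (T : ℝ → X → X) : Prop where
  zero : ∀ r, T 0 r = r
  apply_flow : ∀ σ r, B (T σ r) = B r + σ
  dist_sq : ∀ s t p q,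
    dist (T s p) (T t q) ^ 2 = dist p q ^ 2 - 2 * (t - s) * (B p - B q) + (t - s) ^ 2

theorem IsFactorSubset.exists_isOrthogonalRetraction {X : Type} [MetricSpace X] {Y : Set X}
    {x : X} {π : X → X} (hY : IsFactorSubset Y x) (hπ : IsNearestPointProj Y π) :
    ∃ (Z : Type) (_ : MetricSpace Z) (Q : X → Z), IsOrthogonalRetraction Y π Q := by
  obtain ⟨-, Y₀, Z, _, _, Φ, hΦ, rfl⟩ := hY
  have hΦπ : ∀ r, Φ (π r) = ((Φ r).1, (Φ x).2) := by
    intro r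
    set q := (Equiv.ofBijective Φ hΦ.1).symm ((Φ r).1, (Φ x).2)
    have hΦq : Φ q = ((Φ r).1, (Φ x).2) := Equiv.ofBijective_apply_symm_apply _ _ _
    refine hΦq ▸ congrArg Φ (IsNearestPointProj.apply_eq hπ (by simp [hΦq]) fun a ha => ?_)
    refine (pow_le_pow_iff_left₀ dist_nonneg dist_nonneg two_ne_zero).1 ?_
    rw [hΦ.2 r q, hΦ.2 r a, hΦq, ha, dist_self]
    nlinarith [sq_nonneg (dist (Φ r).1 (Φ a).1)]
  refine ⟨Z, _, fun p => (Φ p).2, fun r => by simp [hΦπ], fun p hp => hΦ.1.1 ?_, fun r r' => ?_⟩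
  · exact (hΦπ p).trans (Prod.ext rfl hp.symm)
  · rw [hΦ.2 r r', hΦ.2 (π r), hΦπ, hΦπ, dist_self]
    ring

theorem IsSplittingLine.exists_isTranslationFlow {X : Type} [MetricSpace X] {ℓ : Set X} {x : X}
    (hℓ : IsSplittingLine ℓ) (hx : x ∈ ℓ) :
    ∃ (B : X → ℝ) (T : ℝ → X → X), IsTranslationFlow B T ∧ ℓ = Set.range fun t => T t x := by
  obtain ⟨-, W, _, Ψ, w₀, hΨ, hℓ⟩ := hℓ
  set e := Equiv.ofBijective Ψ hΨ.1
  have hΨe : ∀ v, Ψ (e.symm v) = v := Equiv.ofBijective_apply_symm_apply _ _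
  have hmem : ∀ p, p ∈ ℓ ↔ (Ψ p).2 = w₀ := fun p => by
    rw [← hΨ.1.1.mem_set_image, hℓ]
    simp
  refine ⟨fun p => (Ψ p).1, fun σ r => e.symm ((Ψ r).1 + σ, (Ψ r).2),
    ⟨fun r => ?_, fun σ r => ?_, fun s t p q => ?_⟩, ?_⟩
  · simp [e]
  · simp [hΨe]
  · rw [hΨ.2, hΨ.2 p q]
    simp only [hΨe, Real.dist_eq, sq_abs]
    ring
  · ext p
    rw [hmem]
    constructor
    · intro hp
      refine ⟨(Ψ p).1 - (Ψ x).1, e.symm_apply_eq.2 (Prod.ext (by simp [e]) ?_)⟩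
      simp [e, hp, (hmem x).1 hx]
    · rintro ⟨t, rfl⟩
      simp [hΨe, (hmem x).1 hx]

theorem IsOrthogonalRetraction.compl_eq_of_mem {X Z : Type} [MetricSpace X] [MetricSpace Z]
    {Y : Set X} {P : X → X} {Q : X → Z} (hP : IsOrthogonalRetraction Y P Q) {p q : X}
    (hp : p ∈ Y) (hq : q ∈ Y) : Q p = Q q := by
  have h := hP.dist_sq p q
  rw [hP.apply_of_mem p hp, hP.apply_of_mem q hq] at h
  exact dist_eq_zero.1 (pow_eq_zero_iff two_ne_zero |>.1 (by linarith))

theorem IsTranslationFlow.dist_sq_flow_right {X : Type} [MetricSpace X] {B : X → ℝ}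
    {T : ℝ → X → X} (hT : IsTranslationFlow B T) (r q : X) (t : ℝ) :
    dist r (T t q) ^ 2 = dist r q ^ 2 - 2 * t * (B r - B q) + t ^ 2 := by
  simpa [hT.zero] using hT.dist_sq 0 t r q

namespace IsOrthogonalRetraction

variable {X Z : Type} [MetricSpace X] [MetricSpace Z] {Y : Set X} {P : X → X} {Q : X → Z}
  {B : X → ℝ} {T : ℝ → X → X} {x : X} {c : ℝ}

theorem dist_sq_add_dist_sq_flow (hP : IsOrthogonalRetraction Y P Q)
    (hT : IsTranslationFlow B T) (x : X) (s t : ℝ) :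
    dist (P (T s x)) (P (T t x)) ^ 2 + dist (Q (T s x)) (Q (T t x)) ^ 2 = (s - t) ^ 2 := by
  rw [← hP.dist_sq, hT.dist_sq]
  simp only [dist_self, sub_self]
  ring

theorem exists_dist_proj_flow_eq_mul_abs (hP : IsOrthogonalRetraction Y P Q)
    (hT : IsTranslationFlow B T) (x : X) :
    ∃ c, 0 ≤ c ∧ ∀ s t, dist (P (T s x)) (P (T t x)) = c * |s - t| :=
  ⟨_, dist_nonneg, dist_eq_mul_abs_of_dist_sq_add_dist_sq_eq (hP.dist_sq_add_dist_sq_flow hT x)⟩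

theorem speed_sq_le_one (hP : IsOrthogonalRetraction Y P Q) (hT : IsTranslationFlow B T)
    (hc : ∀ s t, dist (P (T s x)) (P (T t x)) = c * |s - t|) : c ^ 2 ≤ 1 := by
  have h := hP.dist_sq_add_dist_sq_flow hT x 0 1
  rw [hc] at h
  norm_num at h
  nlinarith [sq_nonneg (dist (Q (T 0 x)) (Q (T 1 x)))]

theorem dist_sq_proj_flow_of_mem (hP : IsOrthogonalRetraction Y P Q)
    (hT : IsTranslationFlow B T) (hx : x ∈ Y)
    (hc : ∀ s t, dist (P (T s x)) (P (T t x)) = c * |s - t|) {p : X} (hp : p ∈ Y)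
    (t : ℝ) : dist p (P (T t x)) ^ 2 = c ^ 2 * t ^ 2 + (-2 * (B p - B x)) * t + dist p x ^ 2 := by
  have hpt := hP.dist_sq p (T t x)
  have hxt := hP.dist_sq x (T t x)
  have hx0 : P (T 0 x) = x := by rw [hT.zero, hP.apply_of_mem x hx]
  have hc' := hc 0 t
  rw [hx0, zero_sub, abs_neg] at hc'
  rw [hP.apply_of_mem p hp, hP.compl_eq_of_mem hp hx, hT.dist_sq_flow_right] at hpt
  rw [hP.apply_of_mem x hx, hT.dist_sq_flow_right, dist_self, hc', mul_pow, sq_abs] at hxt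
  linear_combination hxt - hpt

theorem dist_sq_compl_flow (hP : IsOrthogonalRetraction Y P Q)
    (hT : IsTranslationFlow B T) (hx : x ∈ Y)
    (hc : ∀ s t, dist (P (T s x)) (P (T t x)) = c * |s - t|) (r : X) (t : ℝ) :
    dist (Q r) (Q (T t x)) ^ 2
      = (1 - c ^ 2) * t ^ 2 + (-2 * (B r - B (P r))) * t + dist (Q r) (Q x) ^ 2 := by
  have hrt := hP.dist_sq r (T t x)
  have hrx := hP.dist_sq r x
  have hPr := hP.dist_sq_proj_flow_of_mem hT hx hc (hP.mem r) t
  rw [hT.dist_sq_flow_right] at hrt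
  rw [hP.apply_of_mem x hx] at hrx
  linear_combination hrx - hrt - hPr

theorem sq_sub_le_mul_dist_sq_of_mem (hP : IsOrthogonalRetraction Y P Q)
    (hT : IsTranslationFlow B T) (hx : x ∈ Y)
    (hc : ∀ s t, dist (P (T s x)) (P (T t x)) = c * |s - t|) {p q : X} (hp : p ∈ Y)
    (hq : q ∈ Y) : (B p - B q) ^ 2 ≤ c ^ 2 * dist p q ^ 2 := by
  have := sq_sub_le_of_dist_sq_eq_quadratic (fun t => P (T t x))
    (hP.dist_sq_proj_flow_of_mem hT hx hc hp) (hP.dist_sq_proj_flow_of_mem hT hx hc hq)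
  linarith

theorem sq_sub_le_mul_dist_sq_compl (hP : IsOrthogonalRetraction Y P Q)
    (hT : IsTranslationFlow B T) (hx : x ∈ Y)
    (hc : ∀ s t, dist (P (T s x)) (P (T t x)) = c * |s - t|) (r r' : X) :
    (B r - B (P r) - (B r' - B (P r'))) ^ 2 ≤ (1 - c ^ 2) * dist (Q r) (Q r') ^ 2 := by
  have := sq_sub_le_of_dist_sq_eq_quadratic (fun t => Q (T t x))
    (hP.dist_sq_compl_flow hT hx hc r) (hP.dist_sq_compl_flow hT hx hc r')
  linarith

theorem apply_proj_flow_of_mem (hP : IsOrthogonalRetraction Y P Q)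
    (hT : IsTranslationFlow B T) (hx : x ∈ Y)
    (hc : ∀ s t, dist (P (T s x)) (P (T t x)) = c * |s - t|) {p : X} (hp : p ∈ Y)
    (σ : ℝ) : B (P (T σ p)) = B p + c ^ 2 * σ := by
  have hY := hP.sq_sub_le_mul_dist_sq_of_mem hT hx hc (hP.mem (T σ p)) hp
  have hZ := hP.sq_sub_le_mul_dist_sq_compl hT hx hc (T σ p) p
  have hd := hP.dist_sq (T σ p) p
  rw [hP.apply_of_mem p hp, sub_self, sub_zero, hT.apply_flow] at hZ
  rw [hP.apply_of_mem p hp, ← hT.zero p, hT.dist_sq, hT.zero, dist_self] at hd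
  -- `σ ^ 2 = dist (T σ p) p ^ 2` splits into the two bounds above, so both are sharp
  have := eq_mul_of_sq_le_mul (σ := σ) (b := dist (Q (T σ p)) (Q p) ^ 2) (sq_nonneg c)
    (hP.speed_sq_le_one hT hc) hY (by linear_combination hZ) (by linear_combination -hd)
  linarith

theorem dist_sq_proj_flow_le (hP : IsOrthogonalRetraction Y P Q)
    (hT : IsTranslationFlow B T) (hx : x ∈ Y)
    (hc : ∀ s t, dist (P (T s x)) (P (T t x)) = c * |s - t|) {p q : X} (hp : p ∈ Y)
    (hq : q ∈ Y) (s t : ℝ) :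
    dist (P (T s p)) (P (T t q)) ^ 2
      ≤ dist p q ^ 2 - 2 * (t - s) * (B p - B q) + c ^ 2 * (t - s) ^ 2 := by
  have hd := hP.dist_sq (T s p) (T t q)
  have hZ := hP.sq_sub_le_mul_dist_sq_compl hT hx hc (T s p) (T t q)
  rw [hT.dist_sq] at hd
  rw [hT.apply_flow, hT.apply_flow, hP.apply_proj_flow_of_mem hT hx hc hp,
    hP.apply_proj_flow_of_mem hT hx hc hq] at hZ
  -- the `Z`-components of the two flow lines drift apart at speed at least `√(1 - c²)`
  have hZ' : (1 - c ^ 2) * (t - s) ^ 2 ≤ dist (Q (T s p)) (Q (T t q)) ^ 2 := by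
    rcases (sub_nonneg.2 (hP.speed_sq_le_one hT hc)).eq_or_lt with h | h
    · rw [← h, zero_mul]
      positivity
    · refine le_of_mul_le_mul_left ?_ h
      linear_combination hZ
  linarith

theorem isSplittingLine_range_proj_flow (hP : IsOrthogonalRetraction Y P Q)
    (hT : IsTranslationFlow B T) (hx : x ∈ Y)
    (hc : ∀ s t, dist (P (T s x)) (P (T t x)) = c * |s - t|) (hc₀ : 0 < c) :
    IsSplittingLine (Set.range fun t => (⟨P (T t x), hP.mem _⟩ : Y)) := by
  have hF : IsSplittingFlow (fun p : Y => (B p - B x) / c)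
      (fun τ p => ⟨P (T (τ / c) p), hP.mem _⟩) := by
    refine ⟨fun p => Subtype.ext ?_, fun σ p => ?_, fun s t p q => ?_⟩
    · simp [hT.zero, hP.apply_of_mem _ p.2]
    · simp only [hP.apply_proj_flow_of_mem hT hx hc p.2]
      field_simp
      ring
    · rw [Subtype.dist_eq, Subtype.dist_eq]
      refine (hP.dist_sq_proj_flow_le hT hx hc p.2 q.2 (s / c) (t / c)).trans_eq ?_
      field_simp
      ring
  convert hF.isSplittingLine_range (z := ⟨x, hx⟩) (by simp) using 1
  exact (Function.Surjective.range_comp (fun t => ⟨t * c, by field_simp⟩) _).symm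

end IsOrthogonalRetraction

/-- the projection of a splitting line through `x` onto a factor
subset `Y` through `x` is either a point or a splitting line in `Y`. -/
theorem splitting_line_projects {X : Type} [MetricSpace X] (x : X)
    (Y : Set X) (hY : IsFactorSubset Y x)
    (πY : X → X) (hπY : IsNearestPointProj Y πY)
    (ℓ : Set X) (hℓ : IsSplittingLine ℓ) (hxℓ : x ∈ ℓ) :
    (∃ y : X, πY '' ℓ = {y}) ∨
    IsSplittingLine ((fun p : X => (⟨πY p, (hπY p).1⟩ : Y)) '' ℓ) := by
  obtain ⟨Z, _, Q, hP⟩ := hY.exists_isOrthogonalRetraction hπY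
  obtain ⟨B, T, hT, rfl⟩ := hℓ.exists_isTranslationFlow hxℓ
  obtain ⟨c, hc₀, hc⟩ := hP.exists_dist_proj_flow_eq_mul_abs hT x
  rcases hc₀.eq_or_lt with rfl | hc₀
  · have hx₀ : πY (T 0 x) = x := by rw [hT.zero, hP.apply_of_mem x hY.1]
    have hconst : ∀ t, πY (T t x) = x := fun t =>
      (dist_eq_zero.1 (by rw [hc, zero_mul])).trans hx₀
    refine Or.inl ⟨x, ?_⟩
    rw [← Set.range_comp, Function.comp_def]
    simp only [hconst, Set.range_const]
  · exact Or.inr (Set.range_comp _ _ ▸ hP.isSplittingLine_range_proj_flow hT hY.1 hc hc₀)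
end

section
/- Let X be a complete metric space and x ∈ X, and let H_x be a maximal element of the family of factor subsets through x isometric to Hilbert spaces. Then H_x equals the union of all splitting lines of X passing through x (together with {x} if no splitting line passes through x). -/
/-! An ℓ²-splitting `X ≅ E × Z` with `E` a real inner product space amounts to an action `τ` of
`E` on `X` together with a coordinate `h : X → E` such that
`d(τ u p, q)² = d(p, q)² + 2⟪h p - h q, u⟫ + ‖u‖²`; the factor through `x` is the orbit of `x`.

A point `τ u x` of the Hilbert factor lies on the orbit of `x` under the `ℝ`-action
`t ↦ τ (t • u / ‖u‖)`, which is a splitting line. Conversely, let `σ` be the `ℝ`-action of a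
splitting line through `x`. Writing the identity above for `τ` and for `σ` shows that `σ t` shifts
`h` by `t • c` for a fixed `c` with `‖c‖ ≤ 1`. If `‖c‖ = 1`, the line is `t ↦ τ (t • c) x`.
Otherwise, with `s = √(1 - ‖c‖²)`, the actions `τ` and `σ` combine to an action of `H × ℝ` whose
orbit through `x` is a Hilbert factor containing both `H_x` and the line, hence equal to `H_x` by
maximality. -/

open scoped RealInnerProductSpace
open Set

structure IsTranslationAction {X E : Type} [MetricSpace X] [NormedAddCommGroup E]
    [InnerProductSpace ℝ E] (h : X → E) (τ : E → X → X) : Prop where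
  coord_translate : ∀ u p, h (τ u p) = h p + u
  dist_translate_sq : ∀ u p q, dist (τ u p) q ^ 2 = dist p q ^ 2 + 2 * ⟪h p - h q, u⟫ + ‖u‖ ^ 2

def fiberProj {X E : Type} [Neg E] (h : X → E) (τ : E → X → X) (p : X) : X :=
  τ (-h p) p

namespace IsTranslationAction

variable {X E : Type} [MetricSpace X] [NormedAddCommGroup E] [InnerProductSpace ℝ E]
  {h : X → E} {τ : E → X → X}

theorem dist_translate_self_sq (hτ : IsTranslationAction h τ) (u : E) (p : X) :
    dist (τ u p) p ^ 2 = ‖u‖ ^ 2 := by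
  simpa using hτ.dist_translate_sq u p p

theorem dist_translate_translate_sq (hτ : IsTranslationAction h τ) (u v : E) (p q : X) :
    dist (τ u p) (τ v q) ^ 2 = dist p q ^ 2 + 2 * ⟪h p - h q, u - v⟫ + ‖u - v‖ ^ 2 := by
  rw [hτ.dist_translate_sq, hτ.coord_translate, dist_comm p, hτ.dist_translate_sq, dist_comm q,
    norm_sub_sq_real]
  simp only [inner_sub_left, inner_sub_right, inner_add_left]
  rw [real_inner_comm u v]
  ring

theorem translate_translate (hτ : IsTranslationAction h τ) (u v : E) (p : X) :
    τ v (τ u p) = τ (u + v) p := by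
  have hsq := hτ.dist_translate_sq v (τ u p) (τ (u + v) p)
  rw [hτ.coord_translate, hτ.coord_translate, hτ.dist_translate_translate_sq u (u + v) p p,
    show h p + u - (h p + (u + v)) = -v by abel, show u - (u + v) = -v by abel, dist_self,
    sub_self, inner_zero_left, inner_neg_left, real_inner_self_eq_norm_sq, norm_neg] at hsq
  have hzero : dist (τ v (τ u p)) (τ (u + v) p) ^ 2 = 0 := by
    rw [hsq]
    ring
  exact dist_eq_zero.mp (pow_eq_zero_iff two_ne_zero |>.mp hzero)

theorem dist_translate_self (hτ : IsTranslationAction h τ) (u : E) (p : X) :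
    dist (τ u p) p = ‖u‖ :=
  (sq_eq_sq₀ dist_nonneg (norm_nonneg u)).mp (hτ.dist_translate_self_sq u p)

theorem translate_zero (hτ : IsTranslationAction h τ) (p : X) : τ 0 p = p := by
  simpa using hτ.dist_translate_self_sq 0 p

theorem dist_translate_translate (hτ : IsTranslationAction h τ) (u v : E) (p : X) :
    dist (τ u p) (τ v p) = ‖u - v‖ := by
  rw [← sq_eq_sq₀ dist_nonneg (norm_nonneg _), hτ.dist_translate_translate_sq]
  simp

theorem coord_fiberProj (hτ : IsTranslationAction h τ) (p : X) : h (fiberProj h τ p) = 0 := by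
  rw [fiberProj, hτ.coord_translate, add_neg_cancel]

theorem translate_coord_fiberProj (hτ : IsTranslationAction h τ) (p : X) :
    τ (h p) (fiberProj h τ p) = p := by
  rw [fiberProj, hτ.translate_translate, neg_add_cancel, hτ.translate_zero]

theorem fiberProj_translate (hτ : IsTranslationAction h τ) (u : E) (p : X) :
    fiberProj h τ (τ u p) = fiberProj h τ p := by
  rw [fiberProj, fiberProj, hτ.translate_translate, hτ.coord_translate,
    show u + -(h p + u) = -h p by abel]

theorem dist_sq_eq_norm_sq_add_dist_fiberProj_sq (hτ : IsTranslationAction h τ) (p q : X) :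
    dist p q ^ 2 = ‖h p - h q‖ ^ 2 + dist (fiberProj h τ p) (fiberProj h τ q) ^ 2 := by
  conv_lhs => rw [← hτ.translate_coord_fiberProj p, ← hτ.translate_coord_fiberProj q]
  rw [hτ.dist_translate_translate_sq, hτ.coord_fiberProj, hτ.coord_fiberProj, sub_zero,
    inner_zero_left]
  ring

theorem norm_coord_sub_le_dist (hτ : IsTranslationAction h τ) (p q : X) :
    ‖h p - h q‖ ≤ dist p q := by
  rw [← pow_le_pow_iff_left₀ (norm_nonneg _) dist_nonneg two_ne_zero,
    hτ.dist_sq_eq_norm_sq_add_dist_fiberProj_sq]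
  exact le_add_of_nonneg_right (sq_nonneg _)

theorem isL2Prod (hτ : IsTranslationAction h τ) :
    IsL2Prod fun p => (h p, (⟨fiberProj h τ p, hτ.coord_fiberProj p⟩ : {q // h q = 0})) := by
  refine ⟨⟨fun p q hpq => ?_, fun ⟨u, f, hf⟩ => ⟨τ u f, ?_⟩⟩, fun p q => ?_⟩
  · simp only [Prod.mk.injEq, Subtype.mk.injEq] at hpq
    rw [← hτ.translate_coord_fiberProj p, ← hτ.translate_coord_fiberProj q, hpq.2, hpq.1]
  · refine Prod.ext (show h (τ u f) = u by rw [hτ.coord_translate, hf, zero_add])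
      (Subtype.ext ?_)
    show fiberProj h τ (τ u f) = f
    rw [hτ.fiberProj_translate, fiberProj, hf, neg_zero, hτ.translate_zero]
  · rw [hτ.dist_sq_eq_norm_sq_add_dist_fiberProj_sq, Subtype.dist_eq, dist_eq_norm]

theorem range_translate_eq (hτ : IsTranslationAction h τ) (x : X) :
    range (τ · x) = {p | fiberProj h τ p = fiberProj h τ x} := by
  ext p
  refine ⟨?_, fun (hp : fiberProj h τ p = fiberProj h τ x) => ⟨-h x + h p, ?_⟩⟩
  · rintro ⟨u, rfl⟩
    exact hτ.fiberProj_translate u x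
  · show τ (-h x + h p) x = p
    rw [← hτ.translate_translate]
    show τ (h p) (fiberProj h τ x) = p
    rw [← hp, hτ.translate_coord_fiberProj]

theorem isFactorSubset_range (hτ : IsTranslationAction h τ) (x : X) :
    IsFactorSubset (range (τ · x)) x := by
  refine ⟨⟨0, hτ.translate_zero x⟩, E, _, _, _, _, hτ.isL2Prod, ?_⟩
  simp only [hτ.range_translate_eq, Subtype.mk.injEq]

theorem isHilbertSubset_range [CompleteSpace E] (hτ : IsTranslationAction h τ) (x : X) :
    IsHilbertSubset (range (τ · x)) := by
  refine ⟨E, inferInstance, inferInstance, inferInstance, fun p => h p, Isometry.of_dist_eq ?_,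
    fun a => ?_⟩
  · rintro ⟨_, u, rfl⟩ ⟨_, v, rfl⟩
    rw [Subtype.dist_eq, hτ.dist_translate_translate, dist_eq_norm, hτ.coord_translate,
      hτ.coord_translate, add_sub_add_left_eq_sub]
  · exact ⟨⟨τ (a - h x) x, a - h x, rfl⟩, by simp [hτ.coord_translate]⟩

theorem restrict_line (hτ : IsTranslationAction h τ) {v : E} (hv : ‖v‖ = 1) :
    IsTranslationAction (fun p => ⟪v, h p⟫) (fun t => τ (t • v)) where
  coord_translate t p := by
    rw [hτ.coord_translate, inner_add_right, real_inner_smul_right, real_inner_self_eq_norm_sq,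
      hv, one_pow, mul_one]
  dist_translate_sq t p q := by
    rw [hτ.dist_translate_sq, real_inner_smul_right, norm_smul, hv, mul_one, Real.inner_apply,
      ← inner_sub_right, real_inner_comm v]
    ring

theorem isSplittingLine_range {β : X → ℝ} {σ : ℝ → X → X} (hσ : IsTranslationAction β σ)
    (x : X) : IsSplittingLine (range (σ · x)) := by
  refine ⟨⟨(σ · x), Isometry.of_dist_eq fun s t => ?_, rfl⟩, {q // β q = 0}, inferInstance, _,
    ⟨fiberProj β σ x, hσ.coord_fiberProj x⟩, hσ.isL2Prod, ?_⟩
  · rw [hσ.dist_translate_translate, dist_eq_norm]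
  · rw [← range_comp]
    ext ⟨t, f⟩
    simp only [mem_range, Function.comp_apply, Prod.mk.injEq, Subtype.ext_iff, mem_prod, mem_univ,
      mem_singleton_iff, true_and, hσ.fiberProj_translate]
    refine ⟨fun ⟨s, _, hs⟩ => hs.symm, fun hf => ⟨t - β x, ?_, hf.symm⟩⟩
    rw [hσ.coord_translate, add_sub_cancel]

theorem exists_isSplittingLine (hτ : IsTranslationAction h τ) (x : X) {u : E} (hu : u ≠ 0) :
    ∃ ℓ, IsSplittingLine ℓ ∧ x ∈ ℓ ∧ τ u x ∈ ℓ := by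
  have hv : ‖‖u‖⁻¹ • u‖ = 1 := norm_smul_inv_norm hu
  refine ⟨_, (hτ.restrict_line hv).isSplittingLine_range x, ⟨0, ?_⟩, ⟨‖u‖, ?_⟩⟩
  · simp only [zero_smul, hτ.translate_zero]
  · simp only [smul_smul, mul_inv_cancel₀ (norm_ne_zero_iff.mpr hu), one_smul]

end IsTranslationAction

section Decompositions

variable {X : Type} [MetricSpace X]

theorem IsL2Prod.exists_isTranslationAction {E Z : Type} [NormedAddCommGroup E]
    [InnerProductSpace ℝ E] [MetricSpace Z] {Φ : X → E × Z} (hΦ : IsL2Prod Φ) (x : X) :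
    ∃ τ : E → X → X, IsTranslationAction (fun p => (Φ p).1) τ ∧
      {p | (Φ p).2 = (Φ x).2} = range (τ · x) := by
  let e := Equiv.ofBijective Φ hΦ.1
  have hΦτ : ∀ u p, Φ (e.symm ((Φ p).1 + u, (Φ p).2)) = ((Φ p).1 + u, (Φ p).2) :=
    fun _ _ => e.apply_symm_apply _
  refine ⟨fun u p => e.symm ((Φ p).1 + u, (Φ p).2), ⟨fun u p => by rw [hΦτ], fun u p q => ?_⟩, ?_⟩
  · rw [hΦ.2, hΦτ, hΦ.2 p q, dist_eq_norm, dist_eq_norm, add_sub_right_comm, norm_add_sq_real]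
    ring
  · ext p
    refine ⟨fun hp => ⟨(Φ p).1 - (Φ x).1, ?_⟩, ?_⟩
    · show e.symm ((Φ x).1 + ((Φ p).1 - (Φ x).1), (Φ x).2) = p
      rw [add_sub_cancel, ← show (Φ p).2 = (Φ x).2 from hp]
      exact e.symm_apply_apply p
    · rintro ⟨u, rfl⟩
      show (Φ (e.symm ((Φ x).1 + u, (Φ x).2))).2 = (Φ x).2
      rw [hΦτ]

theorem IsL2Prod.map_fst {Y Y' Z : Type} [MetricSpace Y] [MetricSpace Y'] [MetricSpace Z]
    {Φ : X → Y × Z} (hΦ : IsL2Prod Φ) {g : Y → Y'} (hg : Isometry g) (hg' : g.Surjective) :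
    IsL2Prod fun p => (g (Φ p).1, (Φ p).2) :=
  ⟨(Function.Bijective.prodMap ⟨hg.injective, hg'⟩ Function.bijective_id).comp hΦ.1,
    fun p q => by rw [hΦ.2, hg.dist_eq]⟩

theorem IsL2Prod.isometry_symm_mk {Y Z : Type} [MetricSpace Y] [MetricSpace Z] {Φ : X → Y × Z}
    (hΦ : IsL2Prod Φ) (z : Z) : Isometry fun y => (Equiv.ofBijective Φ hΦ.1).symm (y, z) := by
  refine Isometry.of_dist_eq fun y y' => ?_
  rw [← sq_eq_sq₀ dist_nonneg dist_nonneg, hΦ.2]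
  simp only [Equiv.ofBijective_apply_symm_apply, dist_self]
  ring

theorem IsFactorSubset.exists_isTranslationAction {A : Set X} {x : X}
    (hA : IsFactorSubset A x) (hH : IsHilbertSubset A) :
    ∃ (H : Type) (_ : NormedAddCommGroup H) (_ : InnerProductSpace ℝ H) (_ : CompleteSpace H)
      (h : X → H) (τ : H → X → X), IsTranslationAction h τ ∧ A = range (τ · x) := by
  obtain ⟨-, Y, Z, _, _, Φ, hΦ, rfl⟩ := hA
  obtain ⟨H, _, _, _, f, hf, hf'⟩ := hH
  let e := Equiv.ofBijective Φ hΦ.1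
  have he : ∀ y, (Φ (e.symm (y, (Φ x).2))).2 = (Φ x).2 := fun y => by
    simp [e, Equiv.ofBijective_apply_symm_apply]
  let g : Y → H := fun y => f ⟨e.symm (y, (Φ x).2), he y⟩
  have hg : Isometry g := Isometry.of_dist_eq fun y y' => by
    rw [hf.dist_eq, Subtype.dist_eq, (hΦ.isometry_symm_mk _).dist_eq]
  have hg' : g.Surjective := fun b => by
    obtain ⟨⟨a, ha : (Φ a).2 = (Φ x).2⟩, rfl⟩ := hf' b
    refine ⟨(Φ a).1, congrArg f (Subtype.ext ?_)⟩
    show e.symm ((Φ a).1, (Φ x).2) = a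
    rw [← ha]
    exact e.symm_apply_apply a
  obtain ⟨τ, hτ, hfiber⟩ := (hΦ.map_fst hg hg').exists_isTranslationAction x
  exact ⟨H, inferInstance, inferInstance, inferInstance, _, τ, hτ, hfiber⟩

theorem IsSplittingLine.exists_isTranslationAction {ℓ : Set X} {x : X} (hℓ : IsSplittingLine ℓ)
    (hx : x ∈ ℓ) : ∃ (β : X → ℝ) (σ : ℝ → X → X), IsTranslationAction β σ ∧ ℓ = range (σ · x) := by
  obtain ⟨-, Z, _, Φ, z₀, hΦ, himage⟩ := hℓ
  obtain ⟨σ, hσ, hfiber⟩ := hΦ.exists_isTranslationAction x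
  have hℓ : ℓ = {p | (Φ p).2 = z₀} := by
    rw [← preimage_image_eq ℓ hΦ.1.1, himage]
    ext p
    simp
  have hx₀ : (Φ x).2 = z₀ := by rw [hℓ] at hx; exact hx
  exact ⟨_, σ, hσ, by rw [hℓ, ← hx₀, hfiber]⟩

end Decompositions

namespace IsTranslationAction

variable {X H : Type} [MetricSpace X] [NormedAddCommGroup H] [InnerProductSpace ℝ H]
  {h : X → H} {τ : H → X → X} {β : X → ℝ} {σ : ℝ → X → X}

theorem inner_coord_translate_sub_comm {E : Type} [NormedAddCommGroup E] [InnerProductSpace ℝ E]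
    {g : X → E} {ρ : E → X → X} (hτ : IsTranslationAction h τ) (hρ : IsTranslationAction g ρ)
    (u : H) (v : E) (p q : X) : ⟪h (ρ v p) - h p, u⟫ = ⟪g (τ u q) - g q, v⟫ := by
  have a₁ := hτ.dist_translate_sq u q (ρ v p)
  have a₂ := hτ.dist_translate_sq u q p
  have b₁ := hρ.dist_translate_sq v p q
  have b₂ := hρ.dist_translate_sq v p (τ u q)
  rw [dist_comm (ρ v p)] at b₁ b₂
  rw [dist_comm p] at b₁ b₂
  simp only [inner_sub_left] at a₁ a₂ b₁ b₂ ⊢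
  linarith

theorem coord_translate_real (hτ : IsTranslationAction h τ) (hσ : IsTranslationAction β σ)
    (t : ℝ) (p x : X) : h (σ t p) = h p + t • (h (σ 1 x) - h x) := by
  refine ext_inner_right ℝ fun u => ?_
  have ht := hτ.inner_coord_translate_sub_comm hσ u t p x
  have h₁ := hτ.inner_coord_translate_sub_comm hσ u 1 x x
  rw [Real.inner_apply] at ht h₁
  rw [← sub_eq_zero, ← inner_sub_left, sub_add_eq_sub_sub, inner_sub_left, ht,
    real_inner_smul_left, h₁]
  ring

theorem real_coord_translate (hτ : IsTranslationAction h τ) (hσ : IsTranslationAction β σ)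
    (u : H) (p x : X) : β (τ u p) = β p + ⟪h (σ 1 x) - h x, u⟫ := by
  have h₁ := hσ.inner_coord_translate_sub_comm hτ 1 u p x
  rw [Real.inner_apply, mul_one] at h₁
  linarith

theorem norm_coord_translate_one_sub_le (hτ : IsTranslationAction h τ)
    (hσ : IsTranslationAction β σ) (x : X) : ‖h (σ 1 x) - h x‖ ≤ 1 := by
  simpa [hσ.dist_translate_self] using hτ.norm_coord_sub_le_dist (σ 1 x) x

theorem translate_real_eq_translate_of_norm_eq_one (hτ : IsTranslationAction h τ)
    (hσ : IsTranslationAction β σ) (x : X) (hc : ‖h (σ 1 x) - h x‖ = 1) (t : ℝ) :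
    σ t x = τ (t • (h (σ 1 x) - h x)) x := by
  have hsq := hσ.dist_translate_sq t x (τ (t • (h (σ 1 x) - h x)) x)
  rw [hτ.real_coord_translate hσ _ x x, dist_comm x, hτ.dist_translate_self, norm_smul,
    real_inner_smul_right, real_inner_self_eq_norm_sq, hc, Real.inner_apply, Real.norm_eq_abs,
    mul_one, one_pow, mul_one, sq_abs] at hsq
  refine dist_eq_zero.mp (pow_eq_zero_iff two_ne_zero |>.mp ?_)
  rw [hsq]
  ring

/- `(β - ⟪c, h⟫) / s` is invariant under `τ` and raised by `t * s` under `σ t`, so the pair below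
is a unit-speed coordinate for the combined action. -/
noncomputable def prodCoord (h : X → H) (β : X → ℝ) (c : H) (s : ℝ) (p : X) : WithLp 2 (H × ℝ) :=
  WithLp.toLp 2 (h p, (β p - ⟪c, h p⟫) / s)

noncomputable def prodTranslate (τ : H → X → X) (σ : ℝ → X → X) (c : H) (s : ℝ)
    (w : WithLp 2 (H × ℝ)) (p : X) : X :=
  σ (w.snd / s) (τ (w.fst - (w.snd / s) • c) p)

theorem prod (hτ : IsTranslationAction h τ) (hσ : IsTranslationAction β σ) {c : H}
    (hτσ : ∀ t p, h (σ t p) = h p + t • c) (hστ : ∀ u p, β (τ u p) = β p + ⟪c, u⟫) {s : ℝ}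
    (hs₀ : s ≠ 0) (hs : s ^ 2 + ‖c‖ ^ 2 = 1) :
    IsTranslationAction (prodCoord h β c s) (prodTranslate τ σ c s) where
  coord_translate w p := by
    rw [WithLp.ext_iff, Prod.ext_iff]
    simp only [prodCoord, prodTranslate, WithLp.ofLp_toLp, WithLp.ofLp_add, Prod.fst_add,
      Prod.snd_add, WithLp.ofLp_fst, WithLp.ofLp_snd, hτσ, hτ.coord_translate,
      hσ.coord_translate, hστ]
    refine ⟨by abel, ?_⟩
    simp only [inner_add_right, inner_sub_right, real_inner_smul_right, real_inner_self_eq_norm_sq]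
    field_simp
    linear_combination (-w.snd) * hs
  dist_translate_sq w p q := by
    simp only [prodCoord, prodTranslate, WithLp.prod_inner_apply, WithLp.prod_norm_sq_eq_of_L2,
      WithLp.ofLp_sub, Prod.fst_sub, Prod.snd_sub, WithLp.ofLp_fst, WithLp.ofLp_snd]
    rw [hσ.dist_translate_sq, hτ.dist_translate_sq, hστ]
    simp only [inner_sub_left, inner_sub_right, real_inner_smul_right,
      real_inner_self_eq_norm_sq, norm_sub_sq_real, norm_smul, mul_pow, Real.norm_eq_abs, sq_abs,
      Real.inner_apply, real_inner_comm c]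
    field_simp
    linear_combination (-w.snd ^ 2) * hs

theorem exists_range_superset [CompleteSpace H] (hτ : IsTranslationAction h τ)
    (hσ : IsTranslationAction β σ) (x : X) :
    ∃ (H' : Type) (_ : NormedAddCommGroup H') (_ : InnerProductSpace ℝ H') (_ : CompleteSpace H')
      (h' : X → H') (τ' : H' → X → X), IsTranslationAction h' τ' ∧
        range (τ · x) ⊆ range (τ' · x) ∧ range (σ · x) ⊆ range (τ' · x) := by
  rcases (hτ.norm_coord_translate_one_sub_le hσ x).eq_or_lt with hc | hc
  · refine ⟨H, inferInstance, inferInstance, inferInstance, h, τ, hτ, subset_rfl, ?_⟩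
    rintro _ ⟨t, rfl⟩
    exact ⟨_, (hτ.translate_real_eq_translate_of_norm_eq_one hσ x hc t).symm⟩
  set c := h (σ 1 x) - h x
  set s := √(1 - ‖c‖ ^ 2)
  have hs₀ : s ≠ 0 := (Real.sqrt_pos.mpr (by nlinarith [norm_nonneg c])).ne'
  have hs : s ^ 2 + ‖c‖ ^ 2 = 1 := by
    rw [Real.sq_sqrt (by nlinarith [norm_nonneg c])]
    ring
  refine ⟨WithLp 2 (H × ℝ), inferInstance, inferInstance, inferInstance, _, _,
    hτ.prod hσ (fun t p => hτ.coord_translate_real hσ t p x)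
      (fun u p => hτ.real_coord_translate hσ u p x) hs₀ hs, ?_, ?_⟩
  · rintro _ ⟨u, rfl⟩
    refine ⟨WithLp.toLp 2 (u, 0), ?_⟩
    simp [prodTranslate, hσ.translate_zero]
  · rintro _ ⟨t, rfl⟩
    refine ⟨WithLp.toLp 2 (t • c, t * s), ?_⟩
    simp [prodTranslate, hs₀, c, hτ.translate_zero]

end IsTranslationAction

theorem maximal_hilbert_factor_eq_union_of_splitting_lines_general {X : Type}
    [MetricSpace X] (x : X) (Hx : Set X)
    (hfac : IsFactorSubset Hx x) (hHilb : IsHilbertSubset Hx)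
    (hmax : ∀ B : Set X, IsFactorSubset B x → IsHilbertSubset B → Hx ⊆ B → B = Hx) :
    Hx = insert x (⋃₀ {ℓ : Set X | IsSplittingLine ℓ ∧ x ∈ ℓ}) := by
  obtain ⟨H, _, _, _, h, τ, hτ, rfl⟩ := hfac.exists_isTranslationAction hHilb
  refine Subset.antisymm ?_ (insert_subset ⟨0, hτ.translate_zero x⟩ (sUnion_subset ?_))
  · rintro _ ⟨u, rfl⟩
    rcases eq_or_ne u 0 with rfl | hu
    · exact Or.inl (hτ.translate_zero x)
    · obtain ⟨ℓ, hℓ, hxℓ, huℓ⟩ := hτ.exists_isSplittingLine x hu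
      exact Or.inr ⟨ℓ, ⟨hℓ, hxℓ⟩, huℓ⟩
  · rintro ℓ ⟨hℓ, hxℓ⟩
    obtain ⟨β, σ, hσ, rfl⟩ := hℓ.exists_isTranslationAction hxℓ
    obtain ⟨H', _, _, _, h', τ', hτ', hττ', hστ'⟩ := hτ.exists_range_superset hσ x
    rwa [← hmax _ (hτ'.isFactorSubset_range x) (hτ'.isHilbertSubset_range x) hττ']

/-- a maximal Hilbert factor subset through `x` is the union of all
splitting lines through `x`, together with `x` itself. -/
theorem maximal_hilbert_factor_eq_union_of_splitting_lines {X : Type}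
    [MetricSpace X] [CompleteSpace X] (x : X) (Hx : Set X)
    (hfac : IsFactorSubset Hx x) (hHilb : IsHilbertSubset Hx)
    (hmax : ∀ B : Set X, IsFactorSubset B x → IsHilbertSubset B → Hx ⊆ B → B = Hx) :
    Hx = insert x (⋃₀ {ℓ : Set X | IsSplittingLine ℓ ∧ x ∈ ℓ}) :=
  maximal_hilbert_factor_eq_union_of_splitting_lines_general x Hx hfac hHilb hmax
end
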